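/- arXiv:1303.2819 — 10 statements merged into one kernel-verified Lean document; each statement's English description precedes it below -/
import Mathlib

section
/- For every integer n and every integer w ≥ 2, there exists exactly one width-w nonadjacent form of n, i.e., a radix-2 representation (ε_L … ε_0) with digits in D_w = {0, ±1, ±3, …, ±(2^{w-1}-1)} (zero together with the odd integers of absolute value less than 2^{w-1}), n = Σ_{i=0}^{L} ε_i 2^i, and the property that ε_i ≠ 0 implies ε_{i+1} = … = ε_{i+w-1} = 0 (up to leading zeros). -/
/-- The value of a digit string (least significant digit first) in base 2. -/
def digitValue (l : List ℤ) : ℤ :=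
  ∑ i ∈ Finset.range l.length, l.getD i 0 * 2 ^ i

/-- `l` is a width-`w` nonadjacent form: all digits are zero or odd with
absolute value less than `2^(w-1)`, and any nonzero digit is followed by
`w-1` zero digits. -/
def IsWNAF (w : ℕ) (l : List ℤ) : Prop :=
  (∀ d ∈ l, d = 0 ∨ (Odd d ∧ |d| < 2 ^ (w - 1))) ∧
  ∀ i j : ℕ, l.getD i 0 ≠ 0 → 1 ≤ j → j ≤ w - 1 → l.getD (i + j) 0 = 0

/-!
The digits are determined from the bottom up. Every digit is `0` or odd, so the lowest digit `d`
of a wNAF of `n` is `0` exactly when `n` is even. When `n` is odd, the `w - 1` zeros above `d`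
force `d ≡ n [ZMOD 2 ^ w]`, and `|d| < 2 ^ (w - 1)` leaves a single choice, the balanced residue
`n.bmod (2 ^ w)`. In either case the remaining digits form a wNAF of `(n - d) / 2`, which gives
uniqueness by induction on the length of the expansion and existence by strong induction on `|n|`;
for `w ≥ 2` the balanced residue of an odd number is indeed an admissible digit.
-/


lemma digitValue_nil : digitValue [] = 0 := rfl

lemma digitValue_cons (d : ℤ) (t : List ℤ) :
    digitValue (d :: t) = d + 2 * digitValue t := by
  simp only [digitValue, List.length_cons, Finset.sum_range_succ', List.getD_cons_succ,
    List.getD_cons_zero, pow_zero, mul_one, pow_succ, Finset.mul_sum]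
  ring_nf

lemma digitValue_replicate_append (k : ℕ) (l : List ℤ) :
    digitValue (List.replicate k 0 ++ l) = 2 ^ k * digitValue l := by
  induction k with
  | zero => simp
  | succ k ih => rw [List.replicate_succ, List.cons_append, digitValue_cons, ih]; ring

lemma two_pow_dvd_digitValue {k : ℕ} {l : List ℤ} (h : ∀ i < k, l.getD i 0 = 0) :
    2 ^ k ∣ digitValue l := by
  induction k generalizing l with
  | zero => simp
  | succ k ih =>
    cases l with
    | nil => simp [digitValue_nil]
    | cons d t =>
      have hd : d = 0 := h 0 k.succ_pos
      obtain ⟨c, hc⟩ := ih (l := t) fun i hi => h (i + 1) (by omega)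
      exact ⟨c, by rw [digitValue_cons, hd, hc]; ring⟩

lemma getLast?_ne_some_of_cons {α : Type*} {a b : α} {l : List α}
    (h : (b :: l).getLast? ≠ some a) : l.getLast? ≠ some a := by
  cases l with
  | nil => simp
  | cons c l => rwa [List.getLast?_cons_cons] at h

lemma isWNAF_nil (w : ℕ) : IsWNAF w [] := by
  simp [IsWNAF]

lemma isWNAF_cons_iff {w : ℕ} {d : ℤ} {t : List ℤ} :
    IsWNAF w (d :: t) ↔
      (d = 0 ∨ Odd d ∧ |d| < 2 ^ (w - 1) ∧ ∀ i < w - 1, t.getD i 0 = 0) ∧ IsWNAF w t := by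
  have shift : ∀ i j : ℕ, (d :: t).getD (i + 1 + j) 0 = t.getD (i + j) 0 := fun i j => by
    rw [Nat.add_right_comm, List.getD_cons_succ]
  constructor
  · rintro ⟨hdig, hgap⟩
    refine ⟨?_, fun x hx => hdig x (List.mem_cons_of_mem d hx),
      fun i j hi => by simpa only [shift] using hgap (i + 1) j (by simpa using hi)⟩
    refine (hdig d List.mem_cons_self).imp_right fun hd => ⟨hd.1, hd.2, fun i hi => ?_⟩
    have hd0 : d ≠ 0 := by rintro rfl; simp at hd
    simpa [Nat.add_comm] using hgap 0 (i + 1) (by simpa using hd0) (by omega) (by omega)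
  · rintro ⟨hd, hdig, hgap⟩
    refine ⟨?_, ?_⟩
    · rintro x (_ | ⟨_, hx⟩)
      · exact hd.imp_right fun h => ⟨h.1, h.2.1⟩
      · exact hdig x hx
    · rintro (_ | i) j hi hj1 hjw
      · rcases hd with rfl | hd
        · simp at hi
        · obtain ⟨j, rfl⟩ := Nat.exists_eq_add_of_le' hj1
          simpa [Nat.add_comm] using hd.2.2 j (by omega)
      · simpa only [shift] using hgap i j (by simpa using hi) hj1 hjw

lemma IsWNAF.replicate_append {w : ℕ} {l : List ℤ} (h : IsWNAF w l) (k : ℕ) :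
    IsWNAF w (List.replicate k 0 ++ l) := by
  induction k with
  | zero => exact h
  | succ k ih => exact isWNAF_cons_iff.2 ⟨Or.inl rfl, ih⟩

lemma IsWNAF.eq_nil_of_digitValue_eq_zero {w : ℕ} {l : List ℤ} (h : IsWNAF w l)
    (hlast : l.getLast? ≠ some 0) (hval : digitValue l = 0) : l = [] := by
  induction l with
  | nil => rfl
  | cons d t ih =>
    obtain ⟨hd, ht⟩ := isWNAF_cons_iff.1 h
    rw [digitValue_cons] at hval
    have hd0 : d = 0 := hd.resolve_right fun ⟨⟨k, hk⟩, _⟩ => by omega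
    subst hd0
    have htnil : t = [] := ih ht (getLast?_ne_some_of_cons hlast) (by omega)
    simp [htnil] at hlast

/-- Parity decides whether the lowest digit is zero; two odd lowest digits are congruent modulo
`2 ^ w`, because the next `w - 1` digits vanish, and both lie in `(-2 ^ (w - 1), 2 ^ (w - 1))`. -/
lemma IsWNAF.head_eq_of_digitValue_eq {w : ℕ} {d₁ d₂ : ℤ} {t₁ t₂ : List ℤ}
    (h₁ : IsWNAF w (d₁ :: t₁)) (h₂ : IsWNAF w (d₂ :: t₂))
    (hval : digitValue (d₁ :: t₁) = digitValue (d₂ :: t₂)) : d₁ = d₂ := by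
  rw [digitValue_cons, digitValue_cons] at hval
  rcases (isWNAF_cons_iff.1 h₁).1 with rfl | ⟨⟨k₁, rfl⟩, hlt₁, hzero₁⟩ <;>
    rcases (isWNAF_cons_iff.1 h₂).1 with rfl | ⟨⟨k₂, rfl⟩, hlt₂, hzero₂⟩
  · rfl
  · omega
  · omega
  obtain ⟨c₁, hc₁⟩ := two_pow_dvd_digitValue hzero₁
  obtain ⟨c₂, hc₂⟩ := two_pow_dvd_digitValue hzero₂
  rw [← sub_eq_zero]
  refine Int.eq_zero_of_abs_lt_dvd (m := 2 * 2 ^ (w - 1)) ⟨c₂ - c₁, ?_⟩ ?_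
  · rw [hc₁, hc₂] at hval
    linear_combination hval
  · calc |2 * k₁ + 1 - (2 * k₂ + 1)| ≤ |2 * k₁ + 1| + |2 * k₂ + 1| := abs_sub _ _
      _ < 2 * 2 ^ (w - 1) := by linarith

lemma IsWNAF.eq_of_digitValue_eq {w : ℕ} {l₁ l₂ : List ℤ} (h₁ : IsWNAF w l₁) (h₂ : IsWNAF w l₂)
    (hlast₁ : l₁.getLast? ≠ some 0) (hlast₂ : l₂.getLast? ≠ some 0)
    (hval : digitValue l₁ = digitValue l₂) : l₁ = l₂ := by
  induction l₁ generalizing l₂ with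
  | nil => exact (h₂.eq_nil_of_digitValue_eq_zero hlast₂ hval.symm).symm
  | cons d₁ t₁ ih =>
    cases l₂ with
    | nil => exact h₁.eq_nil_of_digitValue_eq_zero hlast₁ hval
    | cons d₂ t₂ =>
      have hd : d₁ = d₂ := h₁.head_eq_of_digitValue_eq h₂ hval
      subst hd
      rw [digitValue_cons, digitValue_cons] at hval
      rw [ih (isWNAF_cons_iff.1 h₁).2 (isWNAF_cons_iff.1 h₂).2 (getLast?_ne_some_of_cons hlast₁)
        (getLast?_ne_some_of_cons hlast₂) (by omega)]

lemma exists_odd_digit {w : ℕ} (hw : 2 ≤ w) {n : ℤ} (hn : Odd n) :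
    ∃ d m : ℤ, Odd d ∧ |d| < 2 ^ (w - 1) ∧ n = d + 2 ^ w * m ∧ m.natAbs < n.natAbs := by
  set M : ℤ := 2 ^ (w - 1)
  have h2w : (2 : ℤ) ^ w = 2 * M := by rw [← pow_succ', Nat.sub_add_cancel (by omega)]
  -- `M` is even, so the odd balanced residue `d` below cannot be the endpoint `-M`.
  have hM : M = 2 * 2 ^ (w - 2) := by rw [← pow_succ', show w - 2 + 1 = w - 1 by omega]
  have hM0 : 0 < (2 : ℤ) ^ (w - 2) := by positivity
  set d := n.bmod (2 ^ w)
  obtain ⟨m, hm⟩ : ((2 ^ w : ℕ) : ℤ) ∣ n - d := Int.ModEq.dvd Int.bmod_emod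
  have hlo := Int.le_bmod (x := n) (m := 2 ^ w) (by positivity)
  have hhi := Int.bmod_lt (x := n) (m := 2 ^ w) (by positivity)
  push_cast at hm hlo hhi
  rw [h2w] at hm hlo hhi
  have hn0 : 1 ≤ |n| := Int.one_le_abs (by rintro rfl; simp at hn)
  obtain ⟨k, rfl⟩ := hn
  have hdodd : Odd d := ⟨k - M * m, by linear_combination -hm⟩
  have hd : |d| < M := by
    obtain ⟨j, hj⟩ := hdodd
    rw [abs_lt]
    constructor <;> omega
  refine ⟨d, m, hdodd, hd, by rw [h2w]; linarith, ?_⟩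
  have hMm : 2 * M * |m| ≤ |2 * k + 1| + |d| := by
    rw [← abs_of_pos (by positivity : 0 < 2 * M), ← abs_mul, ← hm]
    exact abs_sub _ _
  rw [← Int.ofNat_lt, Int.natCast_natAbs, Int.natCast_natAbs]
  nlinarith [abs_nonneg m]

lemma exists_isWNAF {w : ℕ} (hw : 2 ≤ w) (n : ℤ) :
    ∃ l : List ℤ, IsWNAF w l ∧ digitValue l = n ∧ l.getLast? ≠ some 0 := by
  induction hN : n.natAbs using Nat.strong_induction_on generalizing n with
  | _ N ih =>
  subst hN
  rcases eq_or_ne n 0 with rfl | hn0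
  · exact ⟨[], isWNAF_nil w, digitValue_nil, by simp⟩
  rcases Int.even_or_odd n with ⟨m, rfl⟩ | hodd
  · have hm0 : m ≠ 0 := by rintro rfl; simp at hn0
    obtain ⟨l, hl, hval, hlast⟩ := ih m.natAbs (by omega) m rfl
    have hlnil : l ≠ [] := by rintro rfl; exact hm0 hval.symm
    refine ⟨0 :: l, isWNAF_cons_iff.2 ⟨Or.inl rfl, hl⟩, by rw [digitValue_cons, hval]; ring, ?_⟩
    rwa [List.getLast?_cons_of_ne_nil hlnil]
  · obtain ⟨d, m, hdodd, hd, rfl, hm⟩ := exists_odd_digit hw hodd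
    obtain ⟨l, hl, hval, hlast⟩ := ih m.natAbs hm m rfl
    rcases eq_or_ne l [] with rfl | hlnil
    · refine ⟨[d], isWNAF_cons_iff.2 ⟨Or.inr ⟨hdodd, hd, by simp⟩, isWNAF_nil w⟩, ?_, ?_⟩
      · rw [digitValue_cons, digitValue_nil, ← hval, digitValue_nil]; ring
      · simpa using (show d ≠ 0 by rintro rfl; simp at hdodd)
    have hzero : ∀ i < w - 1, (List.replicate (w - 1) 0 ++ l).getD i 0 = 0 := fun i hi => by
      rw [List.getD_append _ _ _ _ (by simpa using hi), List.getD_replicate _ hi]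
    refine ⟨d :: (List.replicate (w - 1) 0 ++ l),
      isWNAF_cons_iff.2 ⟨Or.inr ⟨hdodd, hd, hzero⟩, hl.replicate_append _⟩, ?_, ?_⟩
    · rw [digitValue_cons, digitValue_replicate_append, hval, ← mul_assoc, ← pow_succ',
        Nat.sub_add_cancel (by omega)]
    · rwa [List.getLast?_cons_of_ne_nil (by simp [hlnil]), List.getLast?_append_of_ne_nil _ hlnil]

/-- Existence and uniqueness (up to leading zeros, i.e. among expansions with
no trailing zero digit) of the width-`w` nonadjacent form. -/
theorem wNAF_exists_unique (w : ℕ) (hw : 2 ≤ w) (n : ℤ) :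
    ∃! l : List ℤ, IsWNAF w l ∧ digitValue l = n ∧
      (l = [] ∨ l.getLast? ≠ some 0) := by
  have hnil : ∀ l : List ℤ, (l = [] ∨ l.getLast? ≠ some 0) ↔ l.getLast? ≠ some 0 :=
    fun l => or_iff_right_of_imp (by rintro rfl; simp)
  simp only [hnil]
  obtain ⟨l, hl, hval, hlast⟩ := exists_isWNAF hw n
  exact ⟨l, ⟨hl, hval, hlast⟩, fun l' ⟨hl', hval', hlast'⟩ =>
    hl'.eq_of_digitValue_eq hl hlast' hlast (hval'.trans hval.symm)⟩
end

section
/- Let A_0, A_1 be n×n complex matrices, H : ℕ → ℂ^{n×n} any function, and G : ℕ → ℂ^{n×n} a function satisfying G(2N + ε) = A_ε G(N) + ε H(N) for all N ≥ 1 and ε ∈ {0,1}. Setting H(0) := G(1), for any binary digits ε_0, …, ε_L ∈ {0,1} one has G(Σ_{p=0}^{L} ε_p 2^p) = Σ_{p=0}^{L} ε_p (Π_{j=0}^{p-1} A_{ε_j}) H(Σ_{j=p+1}^{L} ε_j 2^{j−p−1}), where the matrix product is taken in order A_{ε_0} A_{ε_1} ⋯ A_{ε_{p-1}} and empty products are the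 identity, provided Σ_{p=0}^{L} ε_p 2^p ≥ 1. -/
/-!
Extending `G` by `G 0 = 0` makes the recursion hold for every `N ≥ 0`: for `N = 0` it reads
`G 1 = H 0`. The extended recursion peels off the lowest digit,
`G (2 M + ε₀) = A ε₀ * G M + ε₀ • H M`, and unrolling it along the digits gives the formula,
the empty number contributing `G 0 = 0`.
-/

open Finset

theorem Nat.sum_range_succ_mul_pow (d : ℕ → ℕ) (b L : ℕ) :
    ∑ p ∈ range (L + 1), d p * b ^ p = b * ∑ p ∈ range L, d (p + 1) * b ^ p + d 0 := by
  rw [sum_range_succ', mul_sum, pow_zero, mul_one]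
  congr 1
  refine sum_congr rfl fun p _ => ?_
  ring

section DigitRecursion

variable {R : Type*} [Semiring R] {b : ℕ} {A : Fin b → R} {F H : ℕ → R}

theorem eq_sum_digits_of_recursion (hF0 : F 0 = 0)
    (hrec : ∀ (N : ℕ) (e : Fin b), F (b * N + e) = A e * F N + (e : ℕ) • H N)
    (ε : ℕ → Fin b) (L : ℕ) :
    F (∑ p ∈ range L, (ε p : ℕ) * b ^ p) =
      ∑ p ∈ range L, (ε p : ℕ) •
        (((List.range p).map fun j => A (ε j)).prod *
          H (∑ j ∈ range (L - (p + 1)), (ε (p + 1 + j) : ℕ) * b ^ j)) := by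
  induction L generalizing ε with
  | zero => simpa using hF0
  | succ L ih =>
    rw [Nat.sum_range_succ_mul_pow (fun p => ε p), hrec, ih (fun p => ε (p + 1)), mul_sum,
      sum_range_succ' _ L]
    congr 1
    · refine sum_congr rfl fun p _ => ?_
      rw [List.prod_range_succ', mul_smul_comm, mul_assoc, Nat.add_sub_add_right]
      simp only [Nat.succ_eq_add_one, add_right_comm (p + 1) _ 1]
    · simp only [List.range_zero, List.map_nil, List.prod_nil, one_mul, zero_add,
        Nat.add_sub_cancel, add_comm 1]

end DigitRecursion

/-- Lemma on 2-recursive matrix-valued functions: explicit digit expansion formula. -/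
theorem matrix_recursion_digit_formula (n : ℕ)
    (A : Fin 2 → Matrix (Fin n) (Fin n) ℂ)
    (H G : ℕ → Matrix (Fin n) (Fin n) ℂ)
    (hrec : ∀ N : ℕ, 1 ≤ N → ∀ e : Fin 2,
      G (2 * N + (e : ℕ)) = A e * G N + (e : ℕ) • H N)
    (hH0 : H 0 = G 1)
    (L : ℕ) (ε : ℕ → Fin 2)
    (hpos : 1 ≤ ∑ p ∈ Finset.range (L + 1), ((ε p : ℕ) * 2 ^ p)) :
    G (∑ p ∈ Finset.range (L + 1), (ε p : ℕ) * 2 ^ p) =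
      ∑ p ∈ Finset.range (L + 1), (ε p : ℕ) •
        (((List.range p).map (fun j => A (ε j))).prod *
          H (∑ j ∈ Finset.range (L - p), (ε (p + 1 + j) : ℕ) * 2 ^ j)) := by
  set G₀ := Function.update G 0 0
  have hrec₀ : ∀ (N : ℕ) (e : Fin 2), G₀ (2 * N + e) = A e * G₀ N + (e : ℕ) • H N := by
    intro N e
    rcases Nat.eq_zero_or_pos N with rfl | hN
    · fin_cases e <;> simp [G₀, hH0]
    · simp [G₀, hN.ne', hrec N hN e]
  have hG : G (∑ p ∈ range (L + 1), (ε p : ℕ) * 2 ^ p)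
      = G₀ (∑ p ∈ range (L + 1), (ε p : ℕ) * 2 ^ p) := by
    exact (Function.update_of_ne (Nat.one_le_iff_ne_zero.mp hpos) _ _).symm
  rw [hG, eq_sum_digits_of_recursion (by simp [G₀]) hrec₀]
  simp only [Nat.add_sub_add_right]
end

section
/- For every integer w ≥ 2, the polynomial z^w + z − 2 ∈ ℂ[z] has z = 1 as a root, and every other complex root z satisfies |z| > 1. In particular, 1 is the unique root of smallest absolute value. -/
/-! If `‖z‖ ≤ 1` then also `‖z ^ w‖ ≤ 1`, and two points of the closed unit disc can only sum
to `2` if both equal `1`, since their real parts are at most `1`. -/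

namespace Complex

theorem eq_one_of_norm_le_one_of_one_le_re {z : ℂ} (hz : ‖z‖ ≤ 1) (hre : 1 ≤ z.re) : z = 1 := by
  have hnorm : ‖z‖ = 1 := le_antisymm hz (hre.trans (re_le_norm z))
  have hre1 : z.re = 1 := le_antisymm (hnorm ▸ re_le_norm z) hre
  have him : z.im = 0 := by
    have := sq_norm_sub_sq_re z
    rw [hnorm, hre1] at this
    exact pow_eq_zero_iff two_ne_zero |>.mp (by linarith)
  exact ext (by simp [hre1]) (by simp [him])

theorem eq_one_of_norm_le_one_of_add_eq_two {a b : ℂ} (ha : ‖a‖ ≤ 1) (hb : ‖b‖ ≤ 1)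
    (h : a + b = 2) : a = 1 ∧ b = 1 := by
  have hre : a.re + b.re = 2 := by simpa using congrArg re h
  have ha' := (re_le_norm a).trans ha
  have hb' := (re_le_norm b).trans hb
  exact ⟨eq_one_of_norm_le_one_of_one_le_re ha (by linarith),
    eq_one_of_norm_le_one_of_one_le_re hb (by linarith)⟩

end Complex

theorem root_one_smallest_general (w : ℕ) :
    ((1 : ℂ) ^ w + 1 - 2 = 0) ∧
    ∀ z : ℂ, z ^ w + z - 2 = 0 → z ≠ 1 → 1 < ‖z‖ := by
  refine ⟨by norm_num, fun z hz hne => ?_⟩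
  by_contra! hle
  have hpow : ‖z ^ w‖ ≤ 1 := norm_pow z w ▸ pow_le_one₀ (norm_nonneg z) hle
  exact hne (Complex.eq_one_of_norm_le_one_of_add_eq_two hpow hle (by linear_combination hz)).2

/-- `z = 1` is a root of `z^w + z - 2`, and every other complex root has
absolute value strictly greater than `1`; so `1` is the unique root of
smallest absolute value. -/
theorem root_one_smallest (w : ℕ) (hw : 2 ≤ w) :
    ((1 : ℂ) ^ w + 1 - 2 = 0) ∧
    ∀ z : ℂ, z ^ w + z - 2 = 0 → z ≠ 1 → 1 < ‖z‖ :=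
  root_one_smallest_general w
end

section
/- Fix a real α with 1/2 < α < 1. For all sufficiently large integers w the following holds: for each integer k with 1 ≤ k ≤ w^α, any root z of z^w + z − 2 satisfying |z − exp(2πik/w)| ≤ C/w (for a suitable absolute constant C) has absolute value |z| = 1 + 4π²k²/w³ + O(k³/w⁴). In particular such roots satisfy |z| > 1. -/
/-!
Write `ζ = e^{iθ}` with `θ = 2πk/w`. From `z^w = 2 - z` we get `|z| = exp (log |2 - z| / w)`, so
it suffices to show `log |2 - z| = θ² + O(θ⁴ + θ²/w)`. Since `|2 - ζ|² = 5 - 4 cos θ`, we have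
`log |2 - ζ| = θ² + O(θ⁴)`, and it remains to show `|2 - z|² - |2 - ζ|² = O(θ²/w)`.
Put `v = z/ζ`, so `v^w = 2 - z`. As `v` is close to `1`, `w · arg v = arg (2 - z) = O(θ)`, hence
`log v = O(θ/w)` and `|z - ζ| = O(θ/w)`. Feeding this back gives `log |2 - z| = O(θ²)`, so
`Re v - 1 = O(θ²/w)` and `Re (z - ζ) = O(θ²/w)`. Expanding `|(2 - ζ) - (z - ζ)|²`, the cross term
is then `O(θ²/w)` because `Im (2 - ζ) = -sin θ` is itself `O(θ)`.
-/

open Real Complex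

theorem Real.abs_log_sub_log_le_div {a b m : ℝ} (hm : 0 < m) (ha : m ≤ a) (hb : m ≤ b) :
    |log a - log b| ≤ |a - b| / m := by
  have key : ∀ x y : ℝ, m ≤ x → m ≤ y → log x - log y ≤ |x - y| / m := fun x y hx hy => by
    have hy0 : 0 < y := hm.trans_le hy
    calc log x - log y = log (x / y) := (log_div (hm.trans_le hx).ne' hy0.ne').symm
      _ ≤ x / y - 1 := log_le_sub_one_of_pos (div_pos (hm.trans_le hx) hy0)
      _ = (x - y) / y := by field_simp [hy0.ne']
      _ ≤ |x - y| / m := div_le_div₀ (abs_nonneg _) (le_abs_self _) hm hy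
  rw [abs_sub_le_iff]
  exact ⟨key a b ha hb, abs_sub_comm a b ▸ key b a hb ha⟩

theorem Real.abs_log_sub_sub_one_le {x : ℝ} (hx : 0 < x) :
    |log x - (x - 1)| ≤ (x - 1) ^ 2 / x := by
  have hlo := one_sub_inv_le_log_of_pos hx
  have hup := log_le_sub_one_of_pos hx
  have hsq : (x - 1) ^ 2 / x = (x - 1) - (1 - x⁻¹) := by field_simp
  rw [abs_sub_comm, abs_of_nonneg (by linarith), hsq]
  linarith

theorem Complex.abs_arg_le_of_re_nonneg {y : ℂ} (hy : 0 ≤ y.re) :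
    |arg y| ≤ π / 2 * (|y.im| / ‖y‖) := by
  have h := Real.mul_abs_le_abs_sin (abs_arg_le_pi_div_two_iff.2 hy)
  rw [sin_arg, abs_div, abs_norm] at h
  calc |arg y| = π / 2 * (2 / π * |arg y|) := by field_simp
    _ ≤ π / 2 * (|y.im| / ‖y‖) := by gcongr

theorem Complex.arg_pow_eq_mul_arg {v : ℂ} {n : ℕ} (h₁ : -π < n * arg v) (h₂ : n * arg v ≤ π) :
    arg (v ^ n) = n * arg v := by
  rw [← arg_coe_angle_toReal_eq_arg, arg_pow_coe_angle, ← Real.Angle.coe_nsmul, nsmul_eq_mul,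
    Real.Angle.toReal_coe_eq_self_iff]
  exact ⟨h₁, h₂⟩

theorem Complex.abs_re_exp_sub_one_le {u : ℂ} (hu : ‖u‖ ≤ 1) :
    |(cexp u).re - 1| ≤ |u.re| + ‖u‖ ^ 2 := by
  have h := (abs_re_le_norm _).trans (norm_exp_sub_one_sub_id_le hu)
  have hre : (cexp u - 1 - u).re = ((cexp u).re - 1) - u.re := by simp
  rw [hre] at h
  calc |(cexp u).re - 1| = |((cexp u).re - 1 - u.re) + u.re| := by ring_nf
    _ ≤ _ := (abs_add_le _ _).trans (by linarith)

theorem norm_two_sub_exp_sq (θ : ℝ) : ‖2 - cexp (θ * I)‖ ^ 2 = 5 - 4 * Real.cos θ := by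
  rw [Complex.sq_norm, normSq_apply]
  simp only [sub_re, sub_im, exp_ofReal_mul_I_re, exp_ofReal_mul_I_im, re_ofNat, im_ofNat]
  linear_combination Real.sin_sq_add_cos_sq θ

theorem abs_log_norm_two_sub_exp_sub_sq_le {θ : ℝ} (hθ : |θ| ≤ 1) :
    |Real.log ‖2 - cexp (θ * I)‖ - θ ^ 2| ≤ 3 * θ ^ 4 := by
  set y := ‖2 - cexp (θ * I)‖ ^ 2
  have hcos := abs_le.1 (Real.cos_bound hθ)
  have hθ4 : |θ| ^ 4 = θ ^ 4 := by rw [← abs_pow]; exact abs_of_nonneg (by positivity)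
  have hθ2 : θ ^ 2 ≤ 1 := by nlinarith [sq_abs θ, abs_nonneg θ]
  have hy1 : 1 ≤ y := by simp only [y, norm_two_sub_exp_sq]; linarith [Real.cos_le_one θ]
  have hy : |(y - 1) - 2 * θ ^ 2| ≤ θ ^ 4 / 4 := by
    simp only [y, norm_two_sub_exp_sq]; rw [abs_le]; constructor <;> nlinarith
  have hlog := Real.abs_log_sub_sub_one_le (zero_lt_one.trans_le hy1)
  have hsq : (y - 1) ^ 2 / y ≤ 5 * θ ^ 4 := by
    rw [div_le_iff₀ (by linarith)]
    have := abs_le.1 hy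
    nlinarith [sq_nonneg θ, pow_nonneg (sq_nonneg θ) 3]
  have hly : Real.log y = 2 * Real.log ‖2 - cexp (θ * I)‖ := by simp [y, Real.log_pow]
  rw [hly] at hlog
  have := abs_le.1 hlog; have := abs_le.1 hy
  rw [abs_le]; constructor <;> nlinarith

theorem norm_div_exp (z : ℂ) (θ : ℝ) : ‖z / cexp (θ * I)‖ = ‖z‖ := by
  rw [norm_div, norm_exp_ofReal_mul_I, div_one]

theorem norm_div_exp_sub_one (z : ℂ) (θ : ℝ) : ‖z / cexp (θ * I) - 1‖ = ‖z - cexp (θ * I)‖ := by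
  rw [← norm_div_exp (z - _) θ, sub_div, div_self (Complex.exp_ne_zero _)]

theorem two_pi_mul_div_le_of_le_rpow {α w k : ℝ} (hw : 0 < w) (hk : k ≤ w ^ α)
    (hW : 630 ≤ w ^ (1 - α)) : 2 * π * k / w ≤ 1 / 100 := by
  have hsplit : w ^ α * w ^ (1 - α) = w := by rw [← rpow_add hw, add_sub_cancel, rpow_one]
  have hα : 0 ≤ w ^ α := rpow_nonneg hw.le α
  rw [div_le_div_iff₀ hw (by norm_num)]
  nlinarith [pi_lt_d2, pi_pos]

/-- `θ` plays the role of `2πk/w`. -/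
structure NearRootOfUnity (w : ℕ) (θ : ℝ) (z : ℂ) : Prop where
  isRoot : z ^ w + z - 2 = 0
  exp_pow : cexp (θ * I) ^ w = 1
  thousand_le : 1000 ≤ w
  theta_pos : 0 < θ
  theta_le : θ ≤ 1 / 100
  six_le_mul : 6 ≤ θ * w
  norm_sub_le : ‖z - cexp (θ * I)‖ ≤ 1 / (100 * w)

namespace NearRootOfUnity

variable {w : ℕ} {θ : ℝ} {z : ℂ}

theorem thousand_le_cast (h : NearRootOfUnity w θ z) : (1000 : ℝ) ≤ w := by
  exact_mod_cast h.thousand_le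

theorem cast_pos (h : NearRootOfUnity w θ z) : (0 : ℝ) < w := by
  linarith [h.thousand_le_cast]

theorem div_cast_le_one (h : NearRootOfUnity w θ z) {c : ℝ} (hc : c ≤ 1000) : c / w ≤ 1 := by
  rw [div_le_one h.cast_pos]; linarith [h.thousand_le_cast]

theorem one_div_le (h : NearRootOfUnity w θ z) : 1 / (w : ℝ) ≤ θ / 6 := by
  rw [div_le_div_iff₀ h.cast_pos (by norm_num)]
  linarith [h.six_le_mul]

theorem abs_theta_le_one (h : NearRootOfUnity w θ z) : |θ| ≤ 1 := by
  rw [abs_of_pos h.theta_pos]; linarith [h.theta_le]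

theorem theta_sq_le (h : NearRootOfUnity w θ z) : θ ^ 2 ≤ θ / 100 := by
  nlinarith [h.theta_pos, h.theta_le]

theorem theta_pow_four_le (h : NearRootOfUnity w θ z) : θ ^ 4 ≤ θ ^ 2 / 10000 := by
  nlinarith [h.theta_sq_le, h.theta_le, sq_nonneg θ]

theorem norm_sub_le_theta (h : NearRootOfUnity w θ z) : ‖z - cexp (θ * I)‖ ≤ θ / 600 := by
  have hw := h.cast_pos
  refine h.norm_sub_le.trans ?_
  rw [div_le_div_iff₀ (by positivity) (by norm_num)]
  linarith [h.six_le_mul]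

theorem norm_sub_le_small (h : NearRootOfUnity w θ z) : ‖z - cexp (θ * I)‖ ≤ 1 / 60000 := by
  linarith [h.norm_sub_le_theta, h.theta_le]

theorem abs_norm_sub_one_le (h : NearRootOfUnity w θ z) : |‖z‖ - 1| ≤ 1 / 60000 := by
  have := abs_norm_sub_norm_le z (cexp (θ * I))
  rw [norm_exp_ofReal_mul_I] at this
  exact this.trans h.norm_sub_le_small

theorem le_norm_two_sub (h : NearRootOfUnity w θ z) : 99 / 100 ≤ ‖2 - z‖ := by
  have h₁ := abs_le.1 h.abs_norm_sub_one_le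
  have h₂ := norm_sub_norm_le (2 : ℂ) z
  rw [Complex.norm_two] at h₂
  linarith

theorem norm_eq_exp (h : NearRootOfUnity w θ z) : ‖z‖ = Real.exp (Real.log ‖2 - z‖ / w) := by
  have hz : 0 < ‖z‖ := by linarith [abs_le.1 h.abs_norm_sub_one_le]
  have hpow : ‖z‖ ^ w = ‖2 - z‖ := by
    rw [← norm_pow, show z ^ w = 2 - z by linear_combination h.isRoot]
  rw [← hpow, Real.log_pow, mul_div_cancel_left₀ _ h.cast_pos.ne', Real.exp_log hz]

theorem div_exp_ne_zero (h : NearRootOfUnity w θ z) : z / cexp (θ * I) ≠ 0 := by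
  rw [← norm_ne_zero_iff, norm_div_exp]; linarith [abs_le.1 h.abs_norm_sub_one_le]

theorem abs_log_sub_log_le (h : NearRootOfUnity w θ z) :
    |Real.log ‖2 - z‖ - Real.log ‖2 - cexp (θ * I)‖| ≤ 2 * ‖z - cexp (θ * I)‖ := by
  have hM : (1 : ℝ) ≤ ‖2 - cexp (θ * I)‖ := by
    have := norm_two_sub_exp_sq θ
    nlinarith [Real.cos_le_one θ, norm_nonneg (2 - cexp (θ * I))]
  refine (Real.abs_log_sub_log_le_div (by norm_num) h.le_norm_two_sub (by linarith)).trans ?_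
  have hdiff : |‖2 - z‖ - ‖2 - cexp (θ * I)‖| ≤ ‖z - cexp (θ * I)‖ := by
    simpa [norm_sub_rev] using abs_norm_sub_norm_le (2 - z) (2 - cexp (θ * I))
  rw [div_le_iff₀ (by norm_num)]
  linarith [norm_nonneg (z - cexp (θ * I))]

theorem div_exp_pow (h : NearRootOfUnity w θ z) : (z / cexp (θ * I)) ^ w = 2 - z := by
  rw [div_pow, h.exp_pow, div_one]
  linear_combination h.isRoot

theorem abs_arg_two_sub_le (h : NearRootOfUnity w θ z) : |arg (2 - z)| ≤ 2 * θ := by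
  have hre : 0 ≤ (2 - z).re := by
    have := re_le_norm z
    simp only [sub_re, re_ofNat]
    linarith [abs_le.1 h.abs_norm_sub_one_le]
  have him : |(2 - z).im| ≤ θ + θ / 600 := by
    have hsin : |Real.sin θ| ≤ θ := Real.abs_sin_le_abs.trans (abs_of_pos h.theta_pos).le
    have hdiff := (abs_im_le_norm (z - cexp (θ * I))).trans h.norm_sub_le_theta
    have hz : (2 - z).im = -(Real.sin θ + (z - cexp (θ * I)).im) := by
      simp [exp_ofReal_mul_I_im]
    rw [hz, abs_neg]
    exact (abs_add_le _ _).trans (add_le_add hsin hdiff)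
  have hquot : |(2 - z).im| / ‖2 - z‖ ≤ (θ + θ / 600) / (99 / 100) :=
    div_le_div₀ (by linarith [h.theta_pos]) him (by norm_num) h.le_norm_two_sub
  calc |arg (2 - z)| ≤ π / 2 * (|(2 - z).im| / ‖2 - z‖) := abs_arg_le_of_re_nonneg hre
    _ ≤ 3.15 / 2 * ((θ + θ / 600) / (99 / 100)) := by
      gcongr
      exact pi_lt_d2.le
    _ ≤ 2 * θ := by linarith [h.theta_pos]

theorem arg_two_sub_eq (h : NearRootOfUnity w θ z) :
    arg (2 - z) = w * arg (z / cexp (θ * I)) := by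
  set v := z / cexp (θ * I)
  have hw := h.cast_pos
  have hv1 : ‖v - 1‖ ≤ 1 / (100 * w) := (norm_div_exp_sub_one z θ).trans_le h.norm_sub_le
  have hv : 99 / 100 ≤ ‖v‖ := by
    rw [norm_div_exp]; linarith [abs_le.1 h.abs_norm_sub_one_le]
  have hre : 0 ≤ v.re := by
    have := abs_le.1 ((abs_re_le_norm (v - 1)).trans
      ((norm_div_exp_sub_one z θ).trans_le h.norm_sub_le_small))
    rw [sub_re, one_re] at this
    linarith
  have harg : |arg v| ≤ π / 2 * (1 / (99 * w)) := by
    refine (abs_arg_le_of_re_nonneg hre).trans (mul_le_mul_of_nonneg_left ?_ (by positivity))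
    have him : |v.im| ≤ 1 / (100 * w) := by
      simpa using (abs_im_le_norm (v - 1)).trans hv1
    calc |v.im| / ‖v‖ ≤ (1 / (100 * w)) / (99 / 100) := div_le_div₀ (by positivity) him
          (by norm_num) hv
      _ = 1 / (99 * w) := by field_simp
  have hwarg : |w * arg v| < π := by
    rw [abs_mul, Nat.abs_cast]
    calc (w : ℝ) * |arg v| ≤ w * (π / 2 * (1 / (99 * w))) := by gcongr
      _ = π / 198 := by field_simp; ring
      _ < π := by linarith [pi_pos]
  rw [← h.div_exp_pow, arg_pow_eq_mul_arg] <;> linarith [abs_lt.1 hwarg]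

theorem abs_log_norm_two_sub_exp_le (h : NearRootOfUnity w θ z) :
    |Real.log ‖2 - cexp (θ * I)‖| ≤ θ ^ 2 + 3 * θ ^ 4 := by
  have := abs_log_norm_two_sub_exp_sub_sq_le h.abs_theta_le_one
  have := abs_sub_abs_le_abs_sub (Real.log ‖2 - cexp (θ * I)‖) (θ ^ 2)
  rw [abs_of_nonneg (sq_nonneg θ)] at this
  linarith

theorem re_log_div_exp (h : NearRootOfUnity w θ z) :
    (log (z / cexp (θ * I))).re = Real.log ‖2 - z‖ / w := by
  rw [log_re, norm_div_exp, h.norm_eq_exp, Real.log_exp]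

theorem abs_arg_div_exp_le (h : NearRootOfUnity w θ z) :
    |arg (z / cexp (θ * I))| ≤ 2 * θ / w := by
  have := h.abs_arg_two_sub_le
  rw [h.arg_two_sub_eq, abs_mul, Nat.abs_cast] at this
  rw [le_div_iff₀ h.cast_pos]
  linarith

theorem abs_log_norm_two_sub_le_theta (h : NearRootOfUnity w θ z) :
    |Real.log ‖2 - z‖| ≤ θ := by
  have hLP := h.abs_log_sub_log_le
  have hP := h.abs_log_norm_two_sub_exp_le
  have hε := h.norm_sub_le_theta
  have := abs_sub_abs_le_abs_sub (Real.log ‖2 - z‖) (Real.log ‖2 - cexp (θ * I)‖)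
  linarith [h.theta_sq_le, h.theta_pow_four_le, h.theta_pos]

theorem norm_log_div_exp_le (h : NearRootOfUnity w θ z) :
    ‖log (z / cexp (θ * I))‖ ≤ 3 * θ / w := by
  have hre : |(log (z / cexp (θ * I))).re| ≤ θ / w := by
    rw [h.re_log_div_exp, abs_div, Nat.abs_cast]
    exact div_le_div_of_nonneg_right h.abs_log_norm_two_sub_le_theta h.cast_pos.le
  have him := h.abs_arg_div_exp_le
  rw [← log_im] at him
  calc _ ≤ _ := norm_le_abs_re_add_abs_im _
    _ ≤ θ / w + 2 * θ / w := add_le_add hre him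
    _ = 3 * θ / w := by ring

theorem norm_sub_le_theta_div (h : NearRootOfUnity w θ z) : ‖z - cexp (θ * I)‖ ≤ 6 * θ / w := by
  have hlog := h.norm_log_div_exp_le
  have hsmall : ‖log (z / cexp (θ * I))‖ ≤ 1 :=
    hlog.trans (h.div_cast_le_one (by linarith [h.theta_le]))
  rw [← norm_div_exp_sub_one, ← exp_log h.div_exp_ne_zero]
  calc _ ≤ 2 * ‖log (z / cexp (θ * I))‖ := norm_exp_sub_one_le hsmall
    _ ≤ 2 * (3 * θ / w) := by gcongr
    _ = 6 * θ / w := by ring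

theorem abs_log_norm_two_sub_le_sq (h : NearRootOfUnity w θ z) :
    |Real.log ‖2 - z‖| ≤ 4 * θ ^ 2 := by
  have hLP := h.abs_log_sub_log_le
  have hP := h.abs_log_norm_two_sub_exp_le
  have hε : ‖z - cexp (θ * I)‖ ≤ θ ^ 2 := by
    have := mul_le_mul_of_nonneg_left h.one_div_le (by linarith [h.theta_pos] : 0 ≤ 6 * θ)
    rw [mul_one_div] at this
    nlinarith [h.norm_sub_le_theta_div]
  have := abs_sub_abs_le_abs_sub (Real.log ‖2 - z‖) (Real.log ‖2 - cexp (θ * I)‖)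
  linarith [h.theta_pow_four_le, sq_nonneg θ]

theorem abs_re_div_exp_sub_one_le (h : NearRootOfUnity w θ z) :
    |(z / cexp (θ * I)).re - 1| ≤ 5 * θ ^ 2 / w := by
  set u := log (z / cexp (θ * I))
  have hw := h.cast_pos
  have hu : ‖u‖ ≤ 3 * θ / w := h.norm_log_div_exp_le
  have hu1 : ‖u‖ ≤ 1 := hu.trans (h.div_cast_le_one (by linarith [h.theta_le]))
  have hre : |u.re| ≤ 4 * θ ^ 2 / w := by
    rw [h.re_log_div_exp, abs_div, Nat.abs_cast]
    exact div_le_div_of_nonneg_right h.abs_log_norm_two_sub_le_sq hw.le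
  have hsq : ‖u‖ ^ 2 ≤ θ ^ 2 / w := by
    calc ‖u‖ ^ 2 ≤ (3 * θ / w) ^ 2 := by gcongr
      _ = θ ^ 2 / w * (9 / w) := by ring
      _ ≤ θ ^ 2 / w := mul_le_of_le_one_right (by positivity) (h.div_cast_le_one (by norm_num))
  rw [← exp_log h.div_exp_ne_zero]
  calc _ ≤ |u.re| + ‖u‖ ^ 2 := abs_re_exp_sub_one_le hu1
    _ ≤ 4 * θ ^ 2 / w + θ ^ 2 / w := add_le_add hre hsq
    _ = 5 * θ ^ 2 / w := by ring

theorem abs_re_sub_le (h : NearRootOfUnity w θ z) :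
    |(z - cexp (θ * I)).re| ≤ 11 * θ ^ 2 / w := by
  set v := z / cexp (θ * I)
  have hz : z - cexp (θ * I) = cexp (θ * I) * (v - 1) := by
    simp only [v]; field_simp
  have hre : (z - cexp (θ * I)).re = Real.cos θ * (v.re - 1) - Real.sin θ * v.im := by
    rw [hz, mul_re, exp_ofReal_mul_I_re, exp_ofReal_mul_I_im]; simp
  have him : |v.im| ≤ 6 * θ / w := by
    simpa using (abs_im_le_norm (v - 1)).trans
      ((norm_div_exp_sub_one z θ).trans_le h.norm_sub_le_theta_div)
  have hcos : |Real.cos θ * (v.re - 1)| ≤ 5 * θ ^ 2 / w := by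
    rw [abs_mul]
    exact (mul_le_of_le_one_left (abs_nonneg _) (Real.abs_cos_le_one θ)).trans
      h.abs_re_div_exp_sub_one_le
  have hsin : |Real.sin θ * v.im| ≤ θ * (6 * θ / w) := by
    rw [abs_mul]
    exact mul_le_mul (Real.abs_sin_le_abs.trans (abs_of_pos h.theta_pos).le) him (abs_nonneg _)
      h.theta_pos.le
  rw [hre]
  calc _ ≤ |Real.cos θ * (v.re - 1)| + |Real.sin θ * v.im| := abs_sub _ _
    _ ≤ 5 * θ ^ 2 / w + θ * (6 * θ / w) := add_le_add hcos hsin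
    _ = 11 * θ ^ 2 / w := by ring

theorem abs_sq_norm_two_sub_sub_le (h : NearRootOfUnity w θ z) :
    |‖2 - z‖ ^ 2 - ‖2 - cexp (θ * I)‖ ^ 2| ≤ 80 * θ ^ 2 / w := by
  set a := 2 - cexp (θ * I)
  set b := z - cexp (θ * I)
  have hw := h.cast_pos
  have hexpand : ‖2 - z‖ ^ 2 - ‖a‖ ^ 2 = ‖b‖ ^ 2 - 2 * (a.re * b.re + a.im * b.im) := by
    have := normSq_sub a b
    rw [show a - b = 2 - z by simp only [a, b]; ring, mul_re, conj_re, conj_im] at this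
    simp only [Complex.sq_norm, this]; ring
  have hare : |a.re| ≤ 3 := by
    simp only [a, sub_re, re_ofNat, exp_ofReal_mul_I_re]
    rw [abs_le]; constructor <;> linarith [Real.cos_le_one θ, Real.neg_one_le_cos θ]
  have haim : |a.im| ≤ θ := by
    simpa [a, exp_ofReal_mul_I_im, abs_of_pos h.theta_pos] using Real.abs_sin_le_abs (x := θ)
  have hb := h.norm_sub_le_theta_div
  have hbim : |b.im| ≤ 6 * θ / w := (abs_im_le_norm b).trans hb
  have hbsq : ‖b‖ ^ 2 ≤ θ ^ 2 / w := by
    calc ‖b‖ ^ 2 ≤ (6 * θ / w) ^ 2 := by gcongr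
      _ = θ ^ 2 / w * (36 / w) := by ring
      _ ≤ θ ^ 2 / w := mul_le_of_le_one_right (by positivity) (h.div_cast_le_one (by norm_num))
  have hcross : |a.re * b.re + a.im * b.im| ≤ 3 * (11 * θ ^ 2 / w) + θ * (6 * θ / w) := by
    refine (abs_add_le _ _).trans (add_le_add ?_ ?_) <;> rw [abs_mul]
    · exact mul_le_mul hare h.abs_re_sub_le (abs_nonneg _) (by norm_num)
    · exact mul_le_mul haim hbim (abs_nonneg _) h.theta_pos.le
  rw [hexpand]
  calc _ ≤ ‖b‖ ^ 2 + 2 * |a.re * b.re + a.im * b.im| := by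
        refine (abs_sub _ _).trans ?_
        rw [abs_mul, abs_two, abs_of_nonneg (sq_nonneg _)]
    _ ≤ θ ^ 2 / w + 2 * (3 * (11 * θ ^ 2 / w) + θ * (6 * θ / w)) := by gcongr
    _ ≤ 80 * θ ^ 2 / w := by
      have : 0 ≤ θ ^ 2 / w := by positivity
      field_simp; nlinarith

theorem abs_log_norm_two_sub_sub_sq_le (h : NearRootOfUnity w θ z) :
    |Real.log ‖2 - z‖ - θ ^ 2| ≤ 3 * θ ^ 4 + 41 * θ ^ 2 / w := by
  have hM : (1 : ℝ) ≤ ‖2 - cexp (θ * I)‖ ^ 2 := by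
    rw [norm_two_sub_exp_sq]; linarith [Real.cos_le_one θ]
  have h2z : (49 / 50 : ℝ) ≤ ‖2 - z‖ ^ 2 := by nlinarith [h.le_norm_two_sub]
  have hlog := Real.abs_log_sub_log_le_div (by norm_num) h2z (hM.trans' (by norm_num))
  rw [Real.log_pow, Real.log_pow, Nat.cast_ofNat, ← mul_sub, abs_mul, abs_two] at hlog
  have hLP : |Real.log ‖2 - z‖ - Real.log ‖2 - cexp (θ * I)‖| ≤ 41 * θ ^ 2 / w := by
    have hD := h.abs_sq_norm_two_sub_sub_le
    have : 0 ≤ θ ^ 2 / w := by positivity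
    rw [le_div_iff₀ (by norm_num)] at hlog
    rw [mul_div_assoc] at hD ⊢
    linarith
  have hP := abs_log_norm_two_sub_exp_sub_sq_le h.abs_theta_le_one
  calc _ ≤ |Real.log ‖2 - z‖ - Real.log ‖2 - cexp (θ * I)‖|
        + |Real.log ‖2 - cexp (θ * I)‖ - θ ^ 2| := abs_sub_le _ _ _
    _ ≤ 3 * θ ^ 4 + 41 * θ ^ 2 / w := by linarith

theorem abs_norm_sub_le (h : NearRootOfUnity w θ z) :
    |‖z‖ - (1 + θ ^ 2 / w)| ≤ 4 * θ ^ 4 / w + 41 * θ ^ 2 / w ^ 2 := by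
  rw [h.norm_eq_exp]
  set x := Real.log ‖2 - z‖ / w
  have hw := h.cast_pos
  have hx : |x| ≤ 4 * θ ^ 2 / w := by
    rw [abs_div, Nat.abs_cast]
    exact div_le_div_of_nonneg_right h.abs_log_norm_two_sub_le_sq hw.le
  have hx1 : |x| ≤ 1 := hx.trans (h.div_cast_le_one (by nlinarith [h.theta_sq_le, h.theta_le]))
  have hsq : x ^ 2 ≤ θ ^ 4 / w := by
    calc x ^ 2 = |x| ^ 2 := (sq_abs x).symm
      _ ≤ (4 * θ ^ 2 / w) ^ 2 := by gcongr
      _ = θ ^ 4 / w * (16 / w) := by ring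
      _ ≤ θ ^ 4 / w := mul_le_of_le_one_right (by positivity) (h.div_cast_le_one (by norm_num))
  have hlin : |x - θ ^ 2 / w| ≤ 3 * θ ^ 4 / w + 41 * θ ^ 2 / w ^ 2 := by
    rw [← sub_div, abs_div, Nat.abs_cast]
    calc _ ≤ (3 * θ ^ 4 + 41 * θ ^ 2 / w) / w :=
          div_le_div_of_nonneg_right h.abs_log_norm_two_sub_sub_sq_le hw.le
      _ = _ := by ring
  calc _ = |(Real.exp x - 1 - x) + (x - θ ^ 2 / w)| := by ring_nf
    _ ≤ |Real.exp x - 1 - x| + |x - θ ^ 2 / w| := abs_add_le _ _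
    _ ≤ x ^ 2 + (3 * θ ^ 4 / w + 41 * θ ^ 2 / w ^ 2) :=
      add_le_add (Real.abs_exp_sub_one_sub_id_le hx1) hlin
    _ ≤ θ ^ 4 / w + (3 * θ ^ 4 / w + 41 * θ ^ 2 / w ^ 2) := by gcongr
    _ = _ := by ring

theorem one_lt_norm (h : NearRootOfUnity w θ z) : 1 < ‖z‖ := by
  have hw := h.cast_pos
  have hL := abs_le.1 h.abs_log_norm_two_sub_sub_sq_le
  have hsmall : 41 * θ ^ 2 / w ≤ θ ^ 2 / 2 := by
    rw [div_le_iff₀ hw]; nlinarith [h.thousand_le_cast, sq_nonneg θ]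
  have hpos : 0 < Real.log ‖2 - z‖ := by
    nlinarith [h.theta_pow_four_le, pow_pos h.theta_pos 2]
  rw [h.norm_eq_exp]
  exact Real.one_lt_exp_iff.2 (div_pos hpos hw)

theorem of_isRoot {k : ℕ} (hz : z ^ w + z - 2 = 0) (hw : 1000 ≤ w) (hk : 1 ≤ k)
    (hθ : 2 * π * k / w ≤ 1 / 100) (hclose : ‖z - cexp (2 * π * I * k / w)‖ ≤ 1 / 100 / w) :
    NearRootOfUnity w (2 * π * k / w) z := by
  have hw0 : w ≠ 0 := by omega
  have hk1 : (1 : ℝ) ≤ k := by exact_mod_cast hk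
  have hexp : ((2 * π * k / w : ℝ) : ℂ) * I = 2 * π * I * k / w := by push_cast; ring
  refine ⟨hz, ?_, hw, by positivity, hθ, ?_, ?_⟩
  · rw [hexp, ← Complex.exp_nat_mul, show (w : ℂ) * (2 * π * I * k / w) = k * (2 * π * I) by
      field_simp]
    exact exp_nat_mul_two_pi_mul_I k
  · rw [div_mul_cancel₀ _ (Nat.cast_ne_zero.2 hw0)]; nlinarith [pi_gt_three]
  · rwa [hexp, div_div] at *

theorem abs_norm_sub_le_of_theta_eq {k : ℝ} (h : NearRootOfUnity w (2 * π * k / w) z)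
    (hk : 1 ≤ k) :
    |‖z‖ - (1 + 4 * π ^ 2 * k ^ 2 / (w : ℝ) ^ 3)| ≤
      (64 * π ^ 4 + 164 * π ^ 2) * k ^ 3 / (w : ℝ) ^ 4 := by
  have hw := h.cast_pos
  have hkw : k ≤ w := by
    have := h.theta_le
    rw [div_le_div_iff₀ hw (by norm_num)] at this
    nlinarith [pi_gt_three]
  have hmain := h.abs_norm_sub_le
  rw [show (2 * π * k / w) ^ 2 / w = 4 * π ^ 2 * k ^ 2 / (w : ℝ) ^ 3 by ring] at hmain
  refine hmain.trans ?_
  have h4 : k ^ 4 / (w : ℝ) ^ 5 ≤ k ^ 3 / (w : ℝ) ^ 4 := by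
    rw [div_le_div_iff₀ (by positivity) (by positivity)]
    have : k ^ 4 * w ^ 4 ≤ k ^ 3 * w ^ 4 * w := by
      rw [pow_succ k 3, mul_right_comm]; gcongr
    linarith
  have h2 : k ^ 2 / (w : ℝ) ^ 4 ≤ k ^ 3 / (w : ℝ) ^ 4 := by
    gcongr
    norm_num
  calc _ = 64 * π ^ 4 * (k ^ 4 / (w : ℝ) ^ 5) + 164 * π ^ 2 * (k ^ 2 / (w : ℝ) ^ 4) := by ring
    _ ≤ 64 * π ^ 4 * (k ^ 3 / (w : ℝ) ^ 4) + 164 * π ^ 2 * (k ^ 3 / (w : ℝ) ^ 4) := by gcongr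
    _ = _ := by ring

end NearRootOfUnity

theorem roots_near_unit_circle_general (α : ℝ) (hα₂ : α < 1) :
    ∃ C > (0 : ℝ), ∃ C' > (0 : ℝ), ∃ W : ℕ, ∀ w : ℕ, W ≤ w →
      ∀ k : ℕ, 1 ≤ k → (k : ℝ) ≤ (w : ℝ) ^ α →
        ∀ z : ℂ, z ^ w + z - 2 = 0 →
          ‖z - Complex.exp (2 * π * I * k / w)‖ ≤ C / w →
          (|‖z‖ - (1 + 4 * π ^ 2 * k ^ 2 / (w : ℝ) ^ 3)| ≤
              C' * k ^ 3 / (w : ℝ) ^ 4 ∧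
            1 < ‖z‖) := by
  obtain ⟨W, hW⟩ := Filter.eventually_atTop.1 <| (Filter.eventually_ge_atTop 1000).and <|
    ((tendsto_rpow_atTop (sub_pos.2 hα₂)).comp tendsto_natCast_atTop_atTop).eventually_ge_atTop 630
  refine ⟨1 / 100, by norm_num, 64 * π ^ 4 + 164 * π ^ 2, by positivity, W, ?_⟩
  intro w hw k hk hkα z hz hclose
  obtain ⟨hw1000, hw630⟩ := hW w hw
  have hθ := two_pi_mul_div_le_of_le_rpow (by positivity) hkα hw630
  have h := NearRootOfUnity.of_isRoot hz hw1000 hk hθ hclose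
  exact ⟨h.abs_norm_sub_le_of_theta_eq (by exact_mod_cast hk), h.one_lt_norm⟩

/-- For large `w` and `1 ≤ k ≤ w^α` with `1/2 < α < 1`, any root of
`z^w + z - 2` close to the root of unity `exp(2πik/w)` satisfies
`|z| = 1 + 4π²k²/w³ + O(k³/w⁴)`; in particular `|z| > 1`. -/
theorem roots_near_unit_circle (α : ℝ) (hα₁ : 1 / 2 < α) (hα₂ : α < 1) :
    ∃ C > (0 : ℝ), ∃ C' > (0 : ℝ), ∃ W : ℕ, ∀ w : ℕ, W ≤ w →
      ∀ k : ℕ, 1 ≤ k → (k : ℝ) ≤ (w : ℝ) ^ α →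
        ∀ z : ℂ, z ^ w + z - 2 = 0 →
          ‖z - Complex.exp (2 * π * I * k / w)‖ ≤ C / w →
          (|‖z‖ - (1 + 4 * π ^ 2 * k ^ 2 / (w : ℝ) ^ 3)| ≤
              C' * k ^ 3 / (w : ℝ) ^ 4 ∧
            1 < ‖z‖) :=
  roots_near_unit_circle_general α hα₂
end

section
/- Define the state invariant: after reading the first i digit-triples of (a,b,c) (least significant first), the automaton of the previous context is in state (s,t) where s = ⌊((a mod 2^i) + (b mod 2^i))/2^i⌋ and t = [((a + b) mod 2^i) > (c mod 2^i)]. This invariant holds for all i ≥ 0. -/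
/-!
Write `N = 2 ^ i` and split each of `a, b, c` at position `i` as `x = x % N + N * (x / N % 2)`.
If `s` is the carry into position `i` and `α, β, γ` are the digits there, then the carry out is
`(α + β + s) / 2` and `(a + b) % (2 * N) = (a + b) % N + N * ((α + β + s) % 2)`. Comparing this
with `c % (2 * N) = c % N + N * γ` lexicographically, high digit first, is exactly the rule
`t' = [(α + β + s) % 2 > γ - t]`.
-/

def cmpStep (st : ℕ × ℕ) (inp : ℕ × ℕ × ℕ) : ℕ × ℕ :=
  ((inp.1 + inp.2.1 + st.1) / 2,
    if ((inp.2.2 : ℤ) - st.2 < ((inp.1 + inp.2.1 + st.1) % 2 : ℕ)) then 1 else 0)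

namespace Nat

theorem add_div_eq_div_add_div_add_mod_add_mod_div (N a b : ℕ) :
    (a + b) / N = a / N + b / N + (a % N + b % N) / N := by
  rcases N.eq_zero_or_pos with rfl | hN
  · simp
  have hsplit : a + b = (a % N + b % N) + N * (a / N + b / N) := by
    nth_rw 1 [← Nat.mod_add_div a N, ← Nat.mod_add_div b N]
    ring
  rw [hsplit, Nat.add_mul_div_left _ _ hN]
  ring

theorem mod_mul_add_mod_mul_div (N d a b : ℕ) :
    (a % (N * d) + b % (N * d)) / (N * d) =
      (a / N % d + b / N % d + (a % N + b % N) / N) / d := by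
  rcases N.eq_zero_or_pos with rfl | hN
  · simp
  have hsplit : a % (N * d) + b % (N * d) = (a % N + b % N) + N * (a / N % d + b / N % d) := by
    rw [Nat.mod_mul, Nat.mod_mul (x := b)]
    ring
  rw [hsplit, ← Nat.div_div_eq_div_mul, Nat.add_mul_div_left _ _ hN, add_comm ((_ + _) / N)]

theorem add_mod_mul (N d a b : ℕ) :
    (a + b) % (N * d) =
      (a + b) % N + N * ((a / N % d + b / N % d + (a % N + b % N) / N) % d) := by
  rw [Nat.mod_mul, add_div_eq_div_add_div_add_mod_add_mod_div]
  exact congrArg ((a + b) % N + N * ·) (((mod_modEq _ d).symm.add (mod_modEq _ d).symm).add_right _)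

theorem mul_add_lt_mul_add_iff {N p q x y : ℕ} (hx : x < N) (hy : y < N) :
    N * p + x < N * q + y ↔ p < q ∨ p = q ∧ x < y := by
  constructor
  · intro h
    rcases lt_trichotomy p q with hpq | rfl | hqp
    · exact .inl hpq
    · exact .inr ⟨rfl, by omega⟩
    · have : N * (q + 1) ≤ N * p := Nat.mul_le_mul_left N hqp
      nlinarith
  · rintro (hpq | ⟨rfl, hxy⟩)
    · have : N * (p + 1) ≤ N * q := Nat.mul_le_mul_left N hpq
      nlinarith
    · omega

end Nat

theorem sub_ite_lt_iff {g m : ℕ} (P : Prop) [Decidable P] :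
    (g : ℤ) - ((if P then 1 else 0 : ℕ) : ℤ) < (m : ℤ) ↔ g < m ∨ g = m ∧ P := by
  by_cases hP : P <;> simp [hP, le_iff_lt_or_eq]

def cmpState (N a b c : ℕ) : ℕ × ℕ :=
  ((a % N + b % N) / N, if c % N < (a + b) % N then 1 else 0)

theorem cmpStep_cmpState {N : ℕ} (hN : 0 < N) (a b c : ℕ) :
    cmpStep (cmpState N a b c) (a / N % 2, b / N % 2, c / N % 2) = cmpState (N * 2) a b c := by
  simp only [cmpStep, cmpState, Nat.mod_mul_add_mod_mul_div, Prod.mk.injEq, true_and]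
  rw [Nat.add_mod_mul, Nat.mod_mul (x := c)]
  congr 1
  rw [sub_ite_lt_iff, add_comm (c % N), add_comm ((a + b) % N),
    Nat.mul_add_lt_mul_add_iff (Nat.mod_lt _ hN) (Nat.mod_lt _ hN)]

/-- State invariant of the comparison automaton: after reading the `i` least
significant digit-triples of `(a,b,c)`, the state is
`(⌊((a mod 2^i)+(b mod 2^i))/2^i⌋, [(a+b) mod 2^i > c mod 2^i])`. -/
theorem cmp_automaton_invariant (a b c : ℕ) (i : ℕ) :
    ((List.range i).map
        (fun j => (a / 2 ^ j % 2, b / 2 ^ j % 2, c / 2 ^ j % 2))).foldl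
        cmpStep (0, 0) =
      ((a % 2 ^ i + b % 2 ^ i) / 2 ^ i,
        if c % 2 ^ i < (a + b) % 2 ^ i then 1 else 0) := by
  change _ = cmpState (2 ^ i) a b c
  induction i with
  | zero => simp [cmpState, Nat.mod_one]
  | succ i ih =>
    rw [List.range_succ, List.map_append, List.foldl_append, ih, pow_succ]
    exact cmpStep_cmpState (pow_pos two_pos i) a b c
end

section
/- Let M : ℕ^d → ℂ^{n×n} be a 2-multiplicative function, i.e., M(2m_1+ε_1, …, 2m_d+ε_d) = M_{ε_1,…,ε_d} · M(m_1,…,m_d) for fixed matrices M_{ε_1,…,ε_d} indexed by (ε_1,…,ε_d) ∈ {0,1}^d, with M(0,…,0) = I. For C ⊆ {1,…,d} define G_C(N) = Σ M(m_1,…,m_d) over all tuples with m_i < N for i ∉ C and m_i = N for i ∈ C. Then G_C(2N) = B_{C,∅} G_C(N) and G_C(2N+1) = Σ_{D ⊆ C^c} B_{D,C} G_{C∪D}(N), where B_{C,D} = Σ M_{ε_1,…,ε_d} over all (ε_1,…,ε_d) ∈ {0,1}^d with ε_i = 0 for i ∈ C and ε_i = 1 for i ∈ D. -/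
/-!
Splitting every coordinate into its last binary digit and the rest, `m = 2q + ε`, is a bijection
`ℕ^d ≃ {0,1}^d × ℕ^d` under which 2-multiplicativity turns `M m` into `M_ε · M q`. Each sum
`G_C(2N)` or `G_C(2N+1)` thereby becomes a sum over a product set of digit vectors and tuples,
hence a product of sums. For `2N` the conditions `2q + ε = 2N` and `2q + ε < 2N` force
`(q, ε) = (N, 0)` resp. `q < N`. For `2N + 1` a coordinate outside `C` has either `q < N` or
`(q, ε) = (N, 0)`; sorting the tuples by the set `D` of coordinates of the second kind gives the
sum over `D ⊆ Cᶜ`, coordinates in `C` being forced to `(q, ε) = (N, 1)`.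
-/

open Finset

variable {ι R : Type*}

def binaryDigitEquiv : (ι → Fin 2) × (ι → ℕ) ≃ (ι → ℕ) where
  toFun p i := 2 * p.2 i + p.1 i
  invFun m := (fun i => ⟨m i % 2, Nat.mod_lt _ two_pos⟩, fun i => m i / 2)
  left_inv p := by
    ext i
    · simp only [Nat.mul_add_mod, Nat.mod_eq_of_lt (p.1 i).isLt]
    · have := (p.1 i).isLt
      simp only
      omega
  right_inv m := funext fun i => Nat.div_add_mod (m i) 2

@[simp]
lemma binaryDigitEquiv_apply (p : (ι → Fin 2) × (ι → ℕ)) (i : ι) :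
    binaryDigitEquiv p i = 2 * p.2 i + p.1 i := rfl

section Multiplicative

variable [NonUnitalNonAssocSemiring R] {M : (ι → ℕ) → R} {Mdig : (ι → Fin 2) → R}

lemma sum_eq_sum_digits_mul_sum (hmult : ∀ m ε, M (fun i => 2 * m i + ε i) = Mdig ε * M m)
    {T S : Finset (ι → ℕ)} {E : Finset (ι → Fin 2)}
    (hT : ∀ ε q, binaryDigitEquiv (ε, q) ∈ T ↔ ε ∈ E ∧ q ∈ S) :
    ∑ m ∈ T, M m = (∑ ε ∈ E, Mdig ε) * ∑ q ∈ S, M q := by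
  rw [sum_mul_sum, ← sum_product']
  exact (sum_equiv binaryDigitEquiv (fun p => by simpa using (hT p.1 p.2).symm)
    fun p _ => (hmult p.2 p.1).symm).symm

variable [Fintype ι] [DecidableEq ι]

def face (C : Finset ι) (N : ℕ) : Finset (ι → ℕ) :=
  (Fintype.piFinset fun _ : ι => range (N + 1)).filter
    fun m => ∀ i, if i ∈ C then m i = N else m i < N

lemma mem_face {C : Finset ι} {N : ℕ} {m : ι → ℕ} :
    m ∈ face C N ↔ ∀ i, if i ∈ C then m i = N else m i < N := by
  simp only [face, mem_filter, Fintype.mem_piFinset, mem_range, and_iff_right_iff_imp]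
  intro h i
  have := h i
  split_ifs at this <;> omega

def digitBlock (C D : Finset ι) : Finset (ι → Fin 2) :=
  univ.filter fun ε => (∀ i ∈ C, ε i = 0) ∧ (∀ i ∈ D, ε i = 1)

lemma sum_face_two_mul (hmult : ∀ m ε, M (fun i => 2 * m i + ε i) = Mdig ε * M m)
    (C : Finset ι) (N : ℕ) :
    ∑ m ∈ face C (2 * N), M m = (∑ ε ∈ digitBlock C ∅, Mdig ε) * ∑ q ∈ face C N, M q := by
  refine sum_eq_sum_digits_mul_sum hmult fun ε q => ?_
  simp only [binaryDigitEquiv_apply, mem_face, digitBlock, mem_filter, mem_univ, true_and,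
    notMem_empty, IsEmpty.forall_iff, implies_true, and_true, ← forall_and]
  refine forall_congr' fun i => ?_
  generalize ε i = e
  by_cases hiC : i ∈ C <;> fin_cases e <;> simp [hiC] <;> omega

lemma sum_face_two_mul_add_one (hmult : ∀ m ε, M (fun i => 2 * m i + ε i) = Mdig ε * M m)
    (C : Finset ι) (N : ℕ) :
    ∑ m ∈ face C (2 * N + 1), M m =
      ∑ D ∈ Cᶜ.powerset, (∑ ε ∈ digitBlock D C, Mdig ε) * ∑ q ∈ face (C ∪ D) N, M q := by
  rw [← sum_fiberwise_of_maps_to (g := fun m => Cᶜ.filter fun i => m i = 2 * N)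
    fun m _ => mem_powerset.2 (filter_subset _ _)]
  refine sum_congr rfl fun D hD => sum_eq_sum_digits_mul_sum hmult fun ε q => ?_
  simp only [binaryDigitEquiv_apply, mem_filter, mem_face, digitBlock, Finset.ext_iff, mem_compl,
    mem_union, mem_univ, true_and, ← forall_and]
  refine forall_congr' fun i => ?_
  generalize ε i = e
  by_cases hiC : i ∈ C <;> by_cases hiD : i ∈ D
  · exact absurd (mem_powerset.1 hD hiD) (by simpa using hiC)
  all_goals fin_cases e <;> simp [hiC, hiD] <;> omega

end Multiplicative

theorem two_multiplicative_recursion_general (d n : ℕ)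
    (M : (Fin d → ℕ) → Matrix (Fin n) (Fin n) ℂ)
    (Mdig : (Fin d → Fin 2) → Matrix (Fin n) (Fin n) ℂ)
    (hmult : ∀ (m : Fin d → ℕ) (ε : Fin d → Fin 2),
      M (fun i => 2 * m i + (ε i : ℕ)) = Mdig ε * M m)
    (G : Finset (Fin d) → ℕ → Matrix (Fin n) (Fin n) ℂ)
    (hG : ∀ (C : Finset (Fin d)) (N : ℕ),
      G C N = ∑ m ∈ (Fintype.piFinset fun _ : Fin d => Finset.range (N + 1)).filter
          (fun m => ∀ i : Fin d, if i ∈ C then m i = N else m i < N), M m)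
    (B : Finset (Fin d) → Finset (Fin d) → Matrix (Fin n) (Fin n) ℂ)
    (hB : ∀ C D : Finset (Fin d),
      B C D = ∑ ε ∈ Finset.univ.filter
          (fun ε : Fin d → Fin 2 => (∀ i ∈ C, ε i = 0) ∧ (∀ i ∈ D, ε i = 1)),
        Mdig ε)
    (C : Finset (Fin d)) (N : ℕ) :
    G C (2 * N) = B C ∅ * G C N ∧
    G C (2 * N + 1) = ∑ D ∈ Cᶜ.powerset, B D C * G (C ∪ D) N := by
  -- `convert`, not `exact`: for `Fin d` the statement elaborates Fin-specific decidability
  -- instances (e.g. `Nat.decidableForallFin`) for the filters.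
  have hG' : ∀ C N, G C N = ∑ m ∈ face C N, M m := by
    convert hG using 3
    unfold face
    congr!
  have hB' : ∀ C D, B C D = ∑ ε ∈ digitBlock C D, Mdig ε := by
    convert hB using 3
    unfold digitBlock
    congr!
  constructor
  · rw [hG', hG', hB', sum_face_two_mul hmult]
  · rw [hG', sum_face_two_mul_add_one hmult]
    exact sum_congr rfl fun D _ => by rw [hB', hG']

/-- Recursion formulas for the partial-sum matrix functions `G_C` of a
2-multiplicative matrix-valued function. -/
theorem two_multiplicative_recursion (d n : ℕ) (hd : 1 ≤ d) (hn : 1 ≤ n)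
    (M : (Fin d → ℕ) → Matrix (Fin n) (Fin n) ℂ)
    (Mdig : (Fin d → Fin 2) → Matrix (Fin n) (Fin n) ℂ)
    (hmult : ∀ (m : Fin d → ℕ) (ε : Fin d → Fin 2),
      M (fun i => 2 * m i + (ε i : ℕ)) = Mdig ε * M m)
    (hM0 : M (fun _ => 0) = 1)
    (G : Finset (Fin d) → ℕ → Matrix (Fin n) (Fin n) ℂ)
    (hG : ∀ (C : Finset (Fin d)) (N : ℕ),
      G C N = ∑ m ∈ (Fintype.piFinset fun _ : Fin d => Finset.range (N + 1)).filter
          (fun m => ∀ i : Fin d, if i ∈ C then m i = N else m i < N), M m)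
    (B : Finset (Fin d) → Finset (Fin d) → Matrix (Fin n) (Fin n) ℂ)
    (hB : ∀ C D : Finset (Fin d),
      B C D = ∑ ε ∈ Finset.univ.filter
          (fun ε : Fin d → Fin 2 => (∀ i ∈ C, ε i = 0) ∧ (∀ i ∈ D, ε i = 1)),
        Mdig ε)
    (C : Finset (Fin d)) (N : ℕ) (hN : 1 ≤ N) :
    G C (2 * N) = B C ∅ * G C N ∧
    G C (2 * N + 1) = ∑ D ∈ Cᶜ.powerset, B D C * G (C ∪ D) N :=
  two_multiplicative_recursion_general d n M Mdig hmult G hG B hB C N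
end

section
/- Let w ≥ 2 and ℓ ≤ 0 < u with 2^{w−1} ≤ u − ℓ + 1 < 2^w and ℓ > −2^{w−1}. Define unique(D_{ℓ,u}) = {a ∈ D_{ℓ,u} : u − 2^{w−1} < a < ℓ + 2^{w−1}} and nonunique(D_{ℓ,u}) = D_{ℓ,u} \ unique(D_{ℓ,u}). Then an element a ∈ D_{ℓ,u} lies in unique(D_{ℓ,u}) if and only if a is the only element of D_{ℓ,u} in its residue class modulo 2^{w−1}, and a ∈ nonunique(D_{ℓ,u}) if and only if exactly one other element of D_{ℓ,u} (namely a ± 2^{w−1}) is congruent to a modulo 2^{w−1}. -/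
/-- Characterization of the sets `unique(D_{ℓ,u})` and `nonunique(D_{ℓ,u})`:
an element of `unique` is the only element of `D_{ℓ,u}` in its residue class
modulo `2^(w−1)`, and an element of `nonunique` has exactly one other element
of `D_{ℓ,u}` congruent to it, namely `a ± 2^(w−1)`. -/
theorem unique_nonunique_characterization (w : ℕ) (ℓ u : ℤ) (hw : 2 ≤ w)
    (hℓ : ℓ ≤ 0) (hu : 0 < u)
    (hlow : (2 : ℤ) ^ (w - 1) ≤ u - ℓ + 1) (hhigh : u - ℓ + 1 < 2 ^ w)
    (hℓ' : -2 ^ (w - 1) < ℓ)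
    (D uniq nonuniq : Set ℤ)
    (hD : D = Set.Icc ℓ u)
    (huniq : uniq = {a ∈ D | u - 2 ^ (w - 1) < a ∧ a < ℓ + 2 ^ (w - 1)})
    (hnonuniq : nonuniq = D \ uniq) :
    ∀ a ∈ D,
      (a ∈ uniq ↔ ∀ b ∈ D, b ≡ a [ZMOD ((2 : ℤ) ^ (w - 1))] → b = a) ∧
      (a ∈ nonuniq ↔
        ∃! b : ℤ, b ∈ D ∧ b ≠ a ∧ b ≡ a [ZMOD ((2 : ℤ) ^ (w - 1))]) ∧
      (a ∈ nonuniq → ∀ b ∈ D, b ≠ a → b ≡ a [ZMOD ((2 : ℤ) ^ (w - 1))] →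
        b = a + 2 ^ (w - 1) ∨ b = a - 2 ^ (w - 1)) := by
  subst hD huniq hnonuniq
  intro a ha
  set M : ℤ := 2 ^ (w - 1) with hM
  have hMpos : 0 < M := by positivity
  have h2M : (2:ℤ) ^ w = 2 * M := by
    rw [hM, ← pow_succ']
    congr 1; omega
  rw [h2M] at hhigh
  obtain ⟨haℓ, hau⟩ := ha
  have key : ∀ b ∈ Set.Icc ℓ u, b ≠ a → b ≡ a [ZMOD M] → b = a + M ∨ b = a - M := by
    intro b hb hne hcong
    obtain ⟨k, hk⟩ := Int.ModEq.dvd hcong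
    obtain ⟨hbℓ, hbu⟩ := hb
    have hk1 : -2 < k := by nlinarith
    have hk2 : k < 2 := by nlinarith
    have hk0 : k ≠ 0 := by rintro rfl; simp at hk; omega
    interval_cases k <;> simp at hk <;> omega
  have congp : (a + M) ≡ a [ZMOD M] := by
    simpa using (Int.modEq_iff_dvd.mpr ⟨-1, by ring⟩ : (a + M) ≡ a [ZMOD M])
  have congm : (a - M) ≡ a [ZMOD M] := Int.modEq_iff_dvd.mpr ⟨1, by ring⟩
  constructor
  · constructor
    · rintro ⟨-, h1, h2⟩ b hb hcong
      by_contra hne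
      rcases key b hb hne hcong with rfl | rfl
      · exact absurd hb.2 (by omega)
      · exact absurd hb.1 (by omega)
    · intro h
      refine ⟨⟨haℓ, hau⟩, ?_, ?_⟩
      · by_contra hle
        push_neg at hle
        have := h (a + M) ⟨by omega, by omega⟩ congp
        omega
      · by_contra hle
        push_neg at hle
        have := h (a - M) ⟨by omega, by omega⟩ congm
        omega
  constructor
  · constructor
    · rintro ⟨-, hnu⟩
      have hcases : a ≤ u - M ∨ ℓ + M ≤ a := by
        by_contra hc
        push_neg at hc
        exact hnu ⟨⟨haℓ, hau⟩, by omega, by omega⟩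
      have hnotboth : ¬ (a ≤ u - M ∧ ℓ + M ≤ a) := by omega
      rcases hcases with h1 | h1
      · have h2 : a < ℓ + M := by omega
        refine ⟨a + M, ⟨⟨by omega, by omega⟩, by omega, congp⟩, ?_⟩
        rintro b ⟨hb, hne, hcong⟩
        rcases key b hb hne hcong with rfl | rfl
        · rfl
        · exact absurd hb.1 (by omega)
      · have h2 : u - M < a := by omega
        refine ⟨a - M, ⟨⟨by omega, by omega⟩, by omega, congm⟩, ?_⟩
        rintro b ⟨hb, hne, hcong⟩
        rcases key b hb hne hcong with rfl | rfl
        · exact absurd hb.2 (by omega)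
        · rfl
    · rintro ⟨b, ⟨hb, hne, hcong⟩, -⟩
      refine ⟨⟨haℓ, hau⟩, ?_⟩
      rintro ⟨-, h1, h2⟩
      rcases key b hb hne hcong with rfl | rfl
      · exact absurd hb.2 (by omega)
      · exact absurd hb.1 (by omega)
  · intro _ b hb hne hcong
    exact key b hb hne hcong
end

section
/- Let A be the (w+2)×(w+2) adjacency-type matrix (with parameter z = e^{it}) of the transducer computing the w-NAF Hamming weight: states 0, 1, …, w+1 with transitions 0→0 on input 0 (weight 1), 0→1 (i.e., 0 to the chain) on input 1 with entry z starting a chain of w−1 forced states, the chain ending in two states w and w+1 according to a carry bit, each looping or returning to states 0 or 1. Then the characteristic polynomial of A is (x − 1)(x^w − x^{w−1} − 2^{w−1} z), where z = e^{it}. -/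
open Polynomial

/-- The weighted adjacency matrix (with `z = e^{it}`) of the transducer
computing the Hamming weight of the width-`w` NAF: two looping states `0`
(initial, carry 0) and `1` (carry 1), each looping with weight `1` and
entering the chain of `w−1` forced states `2, …, w` with a nonzero output
(weight `z`); inside the chain both input digits lead forward (weight `2`),
and from the last chain state the transducer returns to state `0` or `1`
according to the carry bit. -/
noncomputable def wNAFMatrix (w : ℕ) (z : ℂ) : Matrix (Fin (w + 1)) (Fin (w + 1)) ℂ :=
  Matrix.of fun i j : Fin (w + 1) =>
    if (i : ℕ) = 0 ∧ (j : ℕ) = 0 then 1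
    else if (i : ℕ) = 1 ∧ (j : ℕ) = 1 then 1
    else if ((i : ℕ) = 0 ∨ (i : ℕ) = 1) ∧ (j : ℕ) = 2 then z
    else if 2 ≤ (i : ℕ) ∧ (i : ℕ) ≤ w - 1 ∧ (j : ℕ) = (i : ℕ) + 1 then 2
    else if (i : ℕ) = w ∧ ((j : ℕ) = 0 ∨ (j : ℕ) = 1) then 1
    else 0

/-!
States `0` and `1` have the same outgoing transitions apart from their loops, so `e₀ - e₁` is a
left eigenvector of the matrix for the eigenvalue `1`. In the basis
`e₀, e₀ + e₁, e₂, …` row `0` becomes `e₀`, which splits off the factor `X - 1`; what remains is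
the matrix with states `0` and `1` merged, i.e. a loop of weight `1` at the merged state plus one
weighted cycle through all `w` states with weights `z, 2, …, 2`. The characteristic polynomial of
a diagonal matrix plus a weighted cycle is `∏ (X - aᵢ) - ∏ cᵢ`, here `(X - 1) X^(w-1) - 2^(w-1) z`.
-/

open Matrix

namespace Matrix

variable {R : Type*} [CommRing R]

def cycleMatrix {n : ℕ} (c : Fin n → R) : Matrix (Fin n) (Fin n) R :=
  of fun i j => if j = finRotate n i then c i else 0

section cycleMatrix

variable {n : ℕ}

theorem diagonal_sub_cycleMatrix_apply_of_val_ne (d c : Fin (n + 1) → R) {i j : Fin (n + 1)}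
    (hdiag : (j : ℕ) ≠ i) (hcycle : (j : ℕ) ≠ if i = Fin.last n then (0 : ℕ) else i + 1) :
    (diagonal d - cycleMatrix c) i j = 0 := by
  rw [sub_apply, diagonal_apply_ne _ (fun h => hdiag (by rw [h])), cycleMatrix, of_apply,
    if_neg (by rw [Fin.ext_iff, coe_finRotate]; exact hcycle), sub_zero]

theorem diagonal_sub_cycleMatrix_apply_self (d c : Fin (n + 2) → R) (i : Fin (n + 2)) :
    (diagonal d - cycleMatrix c) i i = d i := by
  simp [cycleMatrix]

theorem diagonal_sub_cycleMatrix_apply_finRotate (d c : Fin (n + 2) → R) (i : Fin (n + 2)) :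
    (diagonal d - cycleMatrix c) i (finRotate _ i) = -c i := by
  simp [cycleMatrix]

/-- Expanding along column `0`, the two minors that survive are triangular: one carries the
diagonal, the other the cycle. -/
theorem det_diagonal_sub_cycleMatrix (d c : Fin (n + 1) → R) :
    (diagonal d - cycleMatrix c).det = ∏ i, d i - ∏ i, c i := by
  cases n with
  | zero => simp [cycleMatrix]
  | succ n =>
  have hupper : ((diagonal d - cycleMatrix c).submatrix Fin.succ Fin.succ).BlockTriangular id := by
    intro i j (hji : (j : ℕ) < i)
    refine diagonal_sub_cycleMatrix_apply_of_val_ne _ _ ?_ ?_ <;>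
      simp only [Fin.val_succ, Fin.ext_iff, Fin.val_last] <;> (try split_ifs) <;> omega
  have hlower : ((diagonal d - cycleMatrix c).submatrix Fin.castSucc Fin.succ).BlockTriangular
      OrderDual.toDual := by
    intro i j (hij : (i : ℕ) < j)
    refine diagonal_sub_cycleMatrix_apply_of_val_ne _ _ ?_ ?_ <;>
      simp only [Fin.val_succ, Fin.val_castSucc, Fin.ext_iff, Fin.val_last] <;>
      (try split_ifs) <;> omega
  have hsucc (i : Fin (n + 1)) : i.succ = finRotate _ i.castSucc := by simp
  have hlast : (diagonal d - cycleMatrix c) (Fin.last _) 0 = -c (Fin.last _) := by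
    simpa using diagonal_sub_cycleMatrix_apply_finRotate d c (Fin.last _)
  have hsign : ((-1 : R)) ^ (n + 1) * (-1) ^ (n + 1) = 1 := by rw [← mul_pow]; simp
  rw [det_succ_column_zero, Fintype.sum_eq_add 0 (Fin.last _) (Fin.last_pos).ne,
    Fin.succAbove_zero, Fin.succAbove_last, det_of_isUpperTriangular hupper,
    det_of_isLowerTriangular _ hlower]
  · simp only [submatrix_apply, hsucc, diagonal_sub_cycleMatrix_apply_self, hlast,
      diagonal_sub_cycleMatrix_apply_finRotate, Finset.prod_neg, Finset.card_univ,
      Fintype.card_fin, Fin.val_zero, Fin.val_last, Fin.prod_univ_succ (f := d),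
      Fin.prod_univ_castSucc (f := c)]
    linear_combination -(c (Fin.last _) * ∏ i : Fin (n + 1), c i.castSucc) * hsign
  · rintro i ⟨hi0, hilast⟩
    rw [diagonal_sub_cycleMatrix_apply_of_val_ne _ _ (Fin.val_ne_of_ne hi0).symm
      (by simp [hilast]), mul_zero, zero_mul]

theorem charpoly_diagonal_add_cycleMatrix (a c : Fin (n + 1) → R) :
    (diagonal a + cycleMatrix c).charpoly = ∏ i, (X - C (a i)) - ∏ i, C (c i) := by
  have : charmatrix (diagonal a + cycleMatrix c) =
      diagonal (fun i => X - C (a i)) - cycleMatrix (fun i => C (c i)) := by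
    ext i j : 1
    by_cases h : i = j <;> simp [cycleMatrix, h, apply_ite C, sub_add_eq_sub_sub]
  rw [charpoly, this, det_diagonal_sub_cycleMatrix]

end cycleMatrix

theorem charpoly_transvection_neg_mul_mul_transvection {n : Type*} [Fintype n] [DecidableEq n]
    {i j : n} (hij : i ≠ j) (c : R) (M : Matrix n n R) :
    (transvection i j (-c) * M * transvection i j c).charpoly = M.charpoly := by
  rw [charpoly_mul_comm, ← Matrix.mul_assoc, transvection_mul_transvection_same (h := hij),
    add_neg_cancel, transvection_zero, Matrix.one_mul]

theorem charpoly_eq_mul_charpoly_submatrix_succ {n : ℕ}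
    (M : Matrix (Fin (n + 1)) (Fin (n + 1)) R) (h : ∀ j, j ≠ 0 → M 0 j = 0) :
    M.charpoly = (X - C (M 0 0)) * (M.submatrix Fin.succ Fin.succ).charpoly := by
  have hsub : (charmatrix M).submatrix Fin.succ Fin.succ =
      charmatrix (M.submatrix Fin.succ Fin.succ) := by
    ext i j : 1
    by_cases hij : i = j <;> simp [hij]
  rw [charpoly, det_succ_row_zero, Fintype.sum_eq_single 0, charpoly, Fin.succAbove_zero, hsub]
  · simp
  · intro j hj
    rw [charmatrix_apply_ne _ _ _ hj.symm, h j hj]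
    simp

end Matrix

/-- `wNAFMatrix (n + 2) z` written in the basis `e₀, e₀ + e₁, e₂, …`. -/
noncomputable def wNAFMatrixMerged (n : ℕ) (z : ℂ) :
    Matrix (Fin (n + 2 + 1)) (Fin (n + 2 + 1)) ℂ :=
  transvection 0 1 (-1) * wNAFMatrix (n + 2) z * transvection 0 1 1

theorem wNAFMatrixMerged_zero_apply (n : ℕ) (z : ℂ) (j : Fin (n + 2 + 1)) :
    wNAFMatrixMerged n z 0 j = if j = 0 then 1 else 0 := by
  rw [wNAFMatrixMerged]
  rcases eq_or_ne j 1 with rfl | hj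
  · rw [mul_transvection_apply_same, transvection_mul_apply_same, transvection_mul_apply_same]
    simp [wNAFMatrix]
  · rw [mul_transvection_apply_of_ne (hb := hj), transvection_mul_apply_same]
    have hj' : (j : ℕ) ≠ 1 := fun h => hj (Fin.ext h)
    have hzero : ((0 : Fin (n + 2 + 1)) : ℕ) = 0 := rfl
    have hone : ((1 : Fin (n + 2 + 1)) : ℕ) = 1 := rfl
    simp only [wNAFMatrix, of_apply, hzero, hone, Fin.ext_iff]
    by_cases hj0 : (j : ℕ) = 0 <;> by_cases hj2 : (j : ℕ) = 2 <;>
      simp (disch := omega) only [if_pos, if_neg, true_or, or_true, true_and] <;>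
      first | omega | norm_num

theorem wNAFMatrixMerged_submatrix_succ (n : ℕ) (z : ℂ) :
    (wNAFMatrixMerged n z).submatrix Fin.succ Fin.succ =
      diagonal (fun i : Fin (n + 2) => if (i : ℕ) = 0 then 1 else 0) +
        cycleMatrix (fun i => if (i : ℕ) = 0 then z else 2) := by
  ext i j
  have hi := i.isLt
  have hj := j.isLt
  rw [submatrix_apply, Matrix.add_apply, cycleMatrix, of_apply, diagonal_apply, wNAFMatrixMerged]
  simp only [Fin.ext_iff (a := j), coe_finRotate, Fin.ext_iff (a := i), Fin.val_last]
  have hi_cases : (i : ℕ) = 0 ∨ ((i : ℕ) ≠ 0 ∧ (i : ℕ) ≠ n + 1) ∨ (i : ℕ) = n + 1 := by omega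
  rcases eq_or_ne j 0 with rfl | hj0
  · have hone : ((1 : Fin (n + 2 + 1)) : ℕ) = 1 := rfl
    rw [Fin.succ_zero_eq_one, mul_transvection_apply_same,
      transvection_mul_apply_of_ne (ha := Fin.succ_ne_zero i),
      transvection_mul_apply_of_ne (ha := Fin.succ_ne_zero i)]
    simp only [wNAFMatrix, of_apply, Fin.val_zero, hone, Fin.val_succ]
    rcases hi_cases with hi0 | ⟨hi0, hin⟩ | hin <;>
      simp (disch := omega) only [if_pos, if_neg, true_or, or_true, and_true] <;> norm_num
  · have hj1 : j.succ ≠ 1 := by rwa [Ne, ← Fin.succ_zero_eq_one, Fin.succ_inj]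
    have hj0' : (j : ℕ) ≠ 0 := fun h => hj0 (Fin.ext h)
    rw [mul_transvection_apply_of_ne (hb := hj1),
      transvection_mul_apply_of_ne (ha := Fin.succ_ne_zero i)]
    simp only [wNAFMatrix, of_apply, Fin.val_succ]
    rcases hi_cases with hi0 | ⟨hi0, hin⟩ | hin <;> by_cases hji : (j : ℕ) = i + 1 <;>
      simp (disch := omega) only [if_pos, if_neg, ite_self] <;> first | omega | norm_num

theorem charpoly_wNAFMatrixMerged (n : ℕ) (z : ℂ) :
    (wNAFMatrixMerged n z).charpoly = (wNAFMatrix (n + 2) z).charpoly :=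
  charpoly_transvection_neg_mul_mul_transvection (by simp) 1 _

theorem wNAFMatrix_charpoly_general (w : ℕ) (hw : 2 ≤ w) (z : ℂ) :
    (wNAFMatrix w z).charpoly =
      (X - 1) * (X ^ w - X ^ (w - 1) - C ((2 : ℂ) ^ (w - 1) * z)) := by
  obtain ⟨n, rfl⟩ : ∃ n, w = n + 2 := ⟨w - 2, by omega⟩
  have hloops : ∏ i : Fin (n + 2), (X - C (if (i : ℕ) = 0 then (1 : ℂ) else 0)) =
      (X - 1) * X ^ (n + 1) := by
    simp [Fin.prod_univ_succ (n := n + 1)]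
  have hcycle : ∏ i : Fin (n + 2), C (if (i : ℕ) = 0 then z else 2) = C (2 ^ (n + 1) * z) := by
    simp [Fin.prod_univ_succ (n := n + 1), mul_comm]
  rw [← charpoly_wNAFMatrixMerged, charpoly_eq_mul_charpoly_submatrix_succ _
      (fun j hj => by rw [wNAFMatrixMerged_zero_apply, if_neg hj]),
    wNAFMatrixMerged_zero_apply, if_pos rfl, wNAFMatrixMerged_submatrix_succ,
    charpoly_diagonal_add_cycleMatrix, hloops, hcycle, map_one, show n + 2 - 1 = n + 1 from rfl]
  ring

/-- The characteristic polynomial of the `w`-NAF weight transducer matrix is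
`(x − 1)(x^w − x^(w−1) − 2^(w−1) z)` with `z = e^{it}`. -/
theorem wNAFMatrix_charpoly (w : ℕ) (hw : 2 ≤ w) (t : ℝ)
    (z : ℂ) (hz : z = Complex.exp (t * Complex.I)) :
    (wNAFMatrix w z).charpoly =
      (X - 1) * (X ^ w - X ^ (w - 1) - C ((2 : ℂ) ^ (w - 1) * z)) :=
  wNAFMatrix_charpoly_general w hw z
end

section
/- Let w ≥ 2 and consider the polynomial x^w − x^{w−1} − 2^{w−1} over ℂ. Then x = 2 is a root, and every other complex root x satisfies |x| < 2; i.e., 2 is the unique root of maximal absolute value. -/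
/-!
Writing `w = n + 1`, a root satisfies `x ^ n * (x - 1) = 2 ^ n`. If `‖x‖ ≥ 2`, taking norms
forces `‖x - 1‖ ≤ 1`, and the only point of the closed unit disc around `1` outside the open
disc of radius `2` is `2` itself.
-/

namespace Complex

theorem eq_two_of_two_le_norm_of_norm_sub_one_le_one {x : ℂ} (hx : 2 ≤ ‖x‖)
    (hx1 : ‖x - 1‖ ≤ 1) : x = 2 := by
  have hsq : 4 ≤ x.re * x.re + x.im * x.im := by
    have := Complex.sq_norm x
    rw [normSq_apply] at this
    nlinarith [norm_nonneg x]
  have hsq1 : (x.re - 1) * (x.re - 1) + x.im * x.im ≤ 1 := by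
    have := Complex.sq_norm (x - 1)
    rw [normSq_apply, sub_re, sub_im, one_re, one_im, sub_zero] at this
    nlinarith [norm_nonneg (x - 1)]
  have hre : x.re = 2 := by nlinarith
  have him : x.im = 0 := by nlinarith
  exact ext (by simp [hre]) (by simp [him])

theorem norm_sub_one_le_one_of_pow_mul_sub_one_eq {x : ℂ} {r : ℝ} {n : ℕ} (hr : 0 < r)
    (hroot : x ^ n * (x - 1) = (r : ℂ) ^ n) (hx : r ≤ ‖x‖) : ‖x - 1‖ ≤ 1 := by
  have hnorm : ‖x‖ ^ n * ‖x - 1‖ = r ^ n := by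
    simpa [norm_mul, norm_pow, abs_of_pos hr] using congrArg (‖·‖) hroot
  have hpow : r ^ n ≤ ‖x‖ ^ n := pow_le_pow_left₀ hr.le hx n
  have hrn : 0 < r ^ n := pow_pos hr n
  nlinarith [norm_nonneg (x - 1)]

end Complex

/-- `x = 2` is a root of `x^w − x^(w−1) − 2^(w−1)`, and every other complex
root has absolute value strictly less than `2`; so `2` is the unique root of
maximal absolute value. -/
theorem root_two_dominant (w : ℕ) (hw : 2 ≤ w) :
    ((2 : ℂ) ^ w - 2 ^ (w - 1) - 2 ^ (w - 1) = 0) ∧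
    ∀ x : ℂ, x ^ w - x ^ (w - 1) - 2 ^ (w - 1) = 0 → x ≠ 2 →
      ‖x‖ < 2 := by
  obtain ⟨n, rfl⟩ : ∃ n, w = n + 1 := ⟨w - 1, by omega⟩
  simp only [Nat.add_sub_cancel]
  refine ⟨by ring, fun x hx hne => ?_⟩
  have hroot : x ^ n * (x - 1) = ((2 : ℝ) : ℂ) ^ n := by
    push_cast
    linear_combination hx
  by_contra! h2
  exact hne (Complex.eq_two_of_two_le_norm_of_norm_sub_one_le_one h2
    (Complex.norm_sub_one_le_one_of_pow_mul_sub_one_eq two_pos hroot h2))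
end

section
/- Let w ≥ 2 and let μ(t) be the root of x^w − x^{w−1} − 2^{w−1} e^{it} = 0 with μ(0) = 2 (the analytic continuation of the dominant eigenvalue near t = 0). Then μ'(0) = 2i/(w+1), and consequently the first Taylor coefficient of log₂ μ(t) at t = 0 is i/((w+1) log 2); i.e., the expected density constant e = −i μ'(0)/(μ(0) log 2) · log 2 = 1/(w+1). -/
/-!
Differentiating `μ^w − μ^(w−1) = 2^(w−1) e^{it}` at `t = 0`, where `μ = 2`, gives
`(w·2^(w−1) − (w−1)·2^(w−2)) μ'(0) = 2^(w−1) i`, that is `(w + 1) μ'(0) = 2i`.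
-/

open Complex Filter Topology

theorem hasDerivAt_cexp_ofReal_mul_I (x : ℝ) :
    HasDerivAt (fun t : ℝ => exp (t * I)) (exp (x * I) * I) x := by
  simpa using (ofRealCLM.hasDerivAt.mul_const I).cexp

/-- Multiplying by `μ 0` clears the `n * μ 0 ^ (n - 1)` coming from `μ t ^ n`, which is what
makes the case `n = 0` uniform with the others. -/
theorem implicit_deriv_of_pow_succ_sub_pow_sub_mul_cexp (n : ℕ) (c d : ℂ) (μ : ℝ → ℂ)
    (heq : ∀ᶠ t in 𝓝 0, μ t ^ (n + 1) - μ t ^ n - c * exp (t * I) = 0)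
    (hder : HasDerivAt μ d 0) :
    ((n + 1) * μ 0 - n) * μ 0 ^ n * d = c * I * μ 0 := by
  have hderiv := (((hasDerivAt_pow (n + 1) (μ 0)).comp 0 hder).sub
    ((hasDerivAt_pow n (μ 0)).comp 0 hder)).sub ((hasDerivAt_cexp_ofReal_mul_I 0).const_mul c)
  have hzero := hderiv.unique ((hasDerivAt_const (0 : ℝ) (0 : ℂ)).congr_of_eventuallyEq heq)
  have hpred : (n : ℂ) * μ 0 ^ (n - 1) * μ 0 = n * μ 0 ^ n := by
    rcases Nat.eq_zero_or_pos n with rfl | hn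
    · simp
    · rw [mul_assoc, pow_sub_one_mul hn.ne']
  push_cast at hzero
  simp only [zero_mul, exp_zero, one_mul] at hzero
  linear_combination μ 0 * hzero + d * hpred

/-- Implicit differentiation of the dominant eigenvalue: if `μ(t)` satisfies
`μ(t)^w − μ(t)^(w−1) − 2^(w−1) e^{it} = 0` near `t = 0` with `μ(0) = 2` and is
differentiable at `0`, then `μ'(0) = 2i/(w+1)`, and hence the first Taylor
coefficient of `log₂ μ(t)` at `0`, namely `μ'(0)/(μ(0)·log 2)`, equals
`i/((w+1)·log 2)`. -/
theorem dominant_eigenvalue_derivative (w : ℕ) (hw : 2 ≤ w)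
    (μ : ℝ → ℂ) (hμ0 : μ 0 = 2)
    (heq : ∀ᶠ t in nhds (0 : ℝ),
      μ t ^ w - μ t ^ (w - 1) - 2 ^ (w - 1) * Complex.exp (t * I) = 0)
    (d : ℂ) (hder : HasDerivAt μ d 0) :
    d = 2 * I / ((w : ℂ) + 1) ∧
    d / (μ 0 * Real.log 2) = I / (((w : ℂ) + 1) * Real.log 2) := by
  obtain ⟨n, rfl⟩ : ∃ n, w = n + 1 := ⟨w - 1, by omega⟩
  rw [add_tsub_cancel_right] at heq
  have hrel := implicit_deriv_of_pow_succ_sub_pow_sub_mul_cexp n _ d μ heq hder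
  rw [hμ0] at hrel
  have hw1 : ((n + 1 : ℕ) : ℂ) + 1 ≠ 0 := by exact_mod_cast (n + 1).succ_ne_zero
  have hlog : (Real.log 2 : ℂ) ≠ 0 := ofReal_ne_zero.mpr (Real.log_pos one_lt_two).ne'
  have hd : d = 2 * I / ((n + 1 : ℕ) + 1) := by
    rw [eq_div_iff hw1]
    push_cast
    exact mul_right_cancel₀ (pow_ne_zero n two_ne_zero) (by linear_combination hrel)
  refine ⟨hd, ?_⟩
  rw [hμ0, hd]
  field_simp
end
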